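/- arXiv:1801.09315 — 7 statements merged into one kernel-verified Lean document; each statement's English description precedes it below -/
import Mathlib

section
/- Let σ, k, r be continuous on (0,∞) with σ > 0, r ≥ 0, and λ < inf r. Let h_b and h_c be two C² solutions of (1/2)σ²h'' + kh' - rh = -λh on (0,∞) with h_b(ξ) = h_c(ξ) = 1 and h_c'(ξ) = c < b = h_b'(ξ). Then h_b(x) > h_c(x) for all x > ξ and h_b(x) < h_c(x) for all 0 < x < ξ. -/
/-!
The difference `g = h_b - h_c` solves `(1/2) σ² g'' + k g' = (r - λ) g` with `r - λ > 0`, so at an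
interior local maximum (where `g' = 0`, `g'' ≤ 0`) it cannot be positive, and at an interior local
minimum it cannot be negative. Since `g(ξ) = 0` and `g'(ξ) = b - c > 0`, `g` is positive just
right of `ξ`; if it became nonpositive further right, its maximum over the interval in between
would be a positive interior local maximum. The left of `ξ` is symmetric, with minima.
-/

open Set Filter Topology

theorem IsLocalMax.deriv_deriv_nonpos {f : ℝ → ℝ} {m : ℝ} (h : IsLocalMax f m)
    (hc : ContinuousAt f m) : deriv (deriv f) m ≤ 0 := by
  by_contra! hpos
  have hmin : IsLocalMin f m := isLocalMin_of_deriv_deriv_pos hpos h.deriv_eq_zero hc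
  have hconst : f =ᶠ[𝓝 m] fun _ => f m := (h.and hmin).mono fun _ hx => le_antisymm hx.1 hx.2
  have hderiv : deriv f =ᶠ[𝓝 m] fun _ => 0 :=
    hconst.eventuallyEq_nhds.mono fun _ hx => by rw [hx.deriv_eq, deriv_const]
  rw [hderiv.deriv_eq, deriv_const] at hpos
  exact hpos.false

theorem IsLocalMin.deriv_deriv_nonneg {f : ℝ → ℝ} {m : ℝ} (h : IsLocalMin f m)
    (hc : ContinuousAt f m) : 0 ≤ deriv (deriv f) m := by
  simpa using h.neg.deriv_deriv_nonpos hc.neg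

theorem IsLocalMax.nonpos_of_deriv_deriv {g : ℝ → ℝ} {m a k q : ℝ} (h : IsLocalMax g m)
    (hc : ContinuousAt g m) (ha : 0 ≤ a) (hq : 0 < q)
    (hode : a * deriv (deriv g) m + k * deriv g m = q * g m) : g m ≤ 0 := by
  rw [h.deriv_eq_zero] at hode
  nlinarith [mul_nonpos_of_nonneg_of_nonpos ha (h.deriv_deriv_nonpos hc)]

theorem IsLocalMin.nonneg_of_deriv_deriv {g : ℝ → ℝ} {m a k q : ℝ} (h : IsLocalMin g m)
    (hc : ContinuousAt g m) (ha : 0 ≤ a) (hq : 0 < q)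
    (hode : a * deriv (deriv g) m + k * deriv g m = q * g m) : 0 ≤ g m := by
  rw [h.deriv_eq_zero] at hode
  nlinarith [mul_nonneg ha (h.deriv_deriv_nonneg hc)]

theorem exists_mem_Ioo_isLocalMax_pos {g : ℝ → ℝ} {a b y : ℝ} (hg : ContinuousOn g (Icc a b))
    (ha : g a ≤ 0) (hb : g b ≤ 0) (hy : y ∈ Icc a b) (hgy : 0 < g y) :
    ∃ m ∈ Ioo a b, IsLocalMax g m ∧ 0 < g m := by
  obtain ⟨m, hm, hmax⟩ := isCompact_Icc.exists_isMaxOn ⟨y, hy⟩ hg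
  have hgm : 0 < g m := hgy.trans_le (hmax hy)
  have hma : a < m := hm.1.lt_of_ne (by rintro rfl; linarith)
  have hmb : m < b := hm.2.lt_of_ne (by rintro rfl; linarith)
  exact ⟨m, ⟨hma, hmb⟩, hmax.isLocalMax (Icc_mem_nhds hma hmb), hgm⟩

theorem exists_mem_Ioo_isLocalMin_neg {g : ℝ → ℝ} {a b y : ℝ} (hg : ContinuousOn g (Icc a b))
    (ha : 0 ≤ g a) (hb : 0 ≤ g b) (hy : y ∈ Icc a b) (hgy : g y < 0) :
    ∃ m ∈ Ioo a b, IsLocalMin g m ∧ g m < 0 := by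
  obtain ⟨m, hm, hmax, hgm⟩ :=
    exists_mem_Ioo_isLocalMax_pos (g := fun x => -g x) hg.neg (by simpa) (by simpa) hy
      (by simpa)
  exact ⟨m, hm, by simpa using hmax.neg, by simpa using hgm⟩

theorem pos_of_gt_of_isLocalMax_nonpos {g : ℝ → ℝ} {ξ x : ℝ} (hg : ContinuousOn g (Ici ξ))
    (h0 : g ξ = 0) (hd : 0 < deriv g ξ) (hmax : ∀ m, ξ < m → IsLocalMax g m → g m ≤ 0)
    (hx : ξ < x) : 0 < g x := by
  by_contra! hgx
  have hright : ∀ᶠ y in 𝓝[>] ξ, 0 < g y := by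
    filter_upwards [nhdsWithin_le_nhds (eventually_nhdsWithin_sign_eq_of_deriv_pos hd h0),
      self_mem_nhdsWithin] with y hs (hy : ξ < y)
    rwa [sign_pos (sub_pos.2 hy), sign_eq_one_iff] at hs
  obtain ⟨y, hgy, hy⟩ := (hright.and (Ioo_mem_nhdsGT hx)).exists
  obtain ⟨m, hm, hlocal, hgm⟩ := exists_mem_Ioo_isLocalMax_pos (hg.mono Icc_subset_Ici_self)
    h0.le hgx (Ioo_subset_Icc_self hy) hgy
  exact (hmax m hm.1 hlocal).not_gt hgm

theorem neg_of_lt_of_isLocalMin_nonneg {g : ℝ → ℝ} {a ξ x : ℝ} (hg : ContinuousOn g (Ioc a ξ))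
    (h0 : g ξ = 0) (hd : 0 < deriv g ξ) (hmin : ∀ m ∈ Ioo a ξ, IsLocalMin g m → 0 ≤ g m)
    (hx : x ∈ Ioo a ξ) : g x < 0 := by
  by_contra! hgx
  have hleft : ∀ᶠ y in 𝓝[<] ξ, g y < 0 := by
    filter_upwards [nhdsWithin_le_nhds (eventually_nhdsWithin_sign_eq_of_deriv_pos hd h0),
      self_mem_nhdsWithin] with y hs (hy : y < ξ)
    rwa [sign_neg (sub_neg.2 hy), sign_eq_neg_one_iff] at hs
  obtain ⟨y, hgy, hy⟩ := (hleft.and (Ioo_mem_nhdsLT hx.2)).exists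
  obtain ⟨m, hm, hlocal, hgm⟩ :=
    exists_mem_Ioo_isLocalMin_neg (hg.mono (Icc_subset_Ioc_iff hx.2.le |>.2 ⟨hx.1, le_rfl⟩))
      hgx h0.ge (Ioo_subset_Icc_self hy) hgy
  exact (hmin m ⟨hx.1.trans hm.1, hm.2⟩ hlocal).not_gt hgm

theorem deriv_deriv_sub {f g : ℝ → ℝ} {x : ℝ} (hf : ContDiffAt ℝ 2 f x)
    (hg : ContDiffAt ℝ 2 g x) :
    deriv (deriv (f - g)) x = deriv (deriv f) x - deriv (deriv g) x := by
  have h := iteratedDeriv_sub hf hg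
  simp only [iteratedDeriv_eq_iterate] at h
  exact h

theorem order_by_initial_derivative_general
    (σ k r : ℝ → ℝ) (lam : ℝ) (ξ : ℝ) (hξ : 0 < ξ)
    (hr : ∀ x ∈ Ioi (0:ℝ), 0 ≤ r x)
    (hlam : lam < ⨅ x : Ioi (0:ℝ), r x)
    (hb hc : ℝ → ℝ) (b c : ℝ) (hcb : c < b)
    (hhb : ContDiffOn ℝ 2 hb (Ioi 0)) (hhc : ContDiffOn ℝ 2 hc (Ioi 0))
    (hodeb : ∀ x ∈ Ioi (0:ℝ),
      (1/2) * (σ x)^2 * deriv (deriv hb) x + k x * deriv hb x - r x * hb x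
        = -lam * hb x)
    (hodec : ∀ x ∈ Ioi (0:ℝ),
      (1/2) * (σ x)^2 * deriv (deriv hc) x + k x * deriv hc x - r x * hc x
        = -lam * hc x)
    (hb1 : hb ξ = 1) (hc1 : hc ξ = 1)
    (hb' : deriv hb ξ = b) (hc' : deriv hc ξ = c) :
    (∀ x, ξ < x → hc x < hb x) ∧ (∀ x, 0 < x → x < ξ → hb x < hc x) := by
  have hbC (x) (hx : x ∈ Ioi (0:ℝ)) : ContDiffAt ℝ 2 hb x := hhb.contDiffAt (Ioi_mem_nhds hx)
  have hcC (x) (hx : x ∈ Ioi (0:ℝ)) : ContDiffAt ℝ 2 hc x := hhc.contDiffAt (Ioi_mem_nhds hx)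
  have hbdd : BddBelow (range fun x : Ioi (0:ℝ) => r x) :=
    ⟨0, by rintro _ ⟨y, rfl⟩; exact hr y y.2⟩
  have hgap (x) (hx : x ∈ Ioi (0:ℝ)) : 0 < r x - lam :=
    sub_pos.2 <| hlam.trans_le <| ciInf_le hbdd ⟨x, hx⟩
  have hderiv (x) (hx : x ∈ Ioi (0:ℝ)) : deriv (hb - hc) x = deriv hb x - deriv hc x :=
    deriv_sub ((hbC x hx).differentiableAt two_ne_zero) ((hcC x hx).differentiableAt two_ne_zero)
  have hode (x) (hx : x ∈ Ioi (0:ℝ)) : (1/2) * (σ x)^2 * deriv (deriv (hb - hc)) x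
      + k x * deriv (hb - hc) x = (r x - lam) * (hb - hc) x := by
    rw [deriv_deriv_sub (hbC x hx) (hcC x hx), hderiv x hx, Pi.sub_apply]
    linear_combination hodeb x hx - hodec x hx
  have hcont : ContinuousOn (hb - hc) (Ioi 0) := hhb.continuousOn.sub hhc.continuousOn
  have hcontAt (x) (hx : x ∈ Ioi (0:ℝ)) : ContinuousAt (hb - hc) x :=
    hcont.continuousAt (Ioi_mem_nhds hx)
  have h0 : (hb - hc) ξ = 0 := by simp [hb1, hc1]
  have hd : 0 < deriv (hb - hc) ξ := by rw [hderiv ξ hξ, hb', hc']; linarith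
  refine ⟨fun x hx => sub_pos.1 ?_, fun x hx0 hxξ => sub_neg.1 ?_⟩
  · refine pos_of_gt_of_isLocalMax_nonpos (g := hb - hc) (hcont.mono (Ici_subset_Ioi.2 hξ))
      h0 hd (fun m hm hmax => ?_) hx
    have hm0 : m ∈ Ioi (0:ℝ) := hξ.trans hm
    exact hmax.nonpos_of_deriv_deriv (hcontAt m hm0) (by positivity) (hgap m hm0) (hode m hm0)
  · refine neg_of_lt_of_isLocalMin_nonneg (g := hb - hc) (hcont.mono Ioc_subset_Ioi_self)
      h0 hd (fun m hm hmin => ?_) ⟨hx0, hxξ⟩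
    exact hmin.nonneg_of_deriv_deriv (hcontAt m hm.1) (by positivity) (hgap m hm.1)
      (hode m hm.1)

/-- Ordering of solutions by initial derivative: if `h_c'(ξ) = c < b = h_b'(ξ)`
then `h_b > h_c` right of `ξ` and `h_b < h_c` left of `ξ`. -/
theorem order_by_initial_derivative
    (σ k r : ℝ → ℝ) (lam : ℝ) (ξ : ℝ) (hξ : 0 < ξ)
    (hσc : ContinuousOn σ (Ioi 0)) (hkc : ContinuousOn k (Ioi 0))
    (hrc : ContinuousOn r (Ioi 0))
    (hσ : ∀ x ∈ Ioi (0:ℝ), 0 < σ x)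
    (hr : ∀ x ∈ Ioi (0:ℝ), 0 ≤ r x)
    (hlam : lam < ⨅ x : Ioi (0:ℝ), r x)
    (hb hc : ℝ → ℝ) (b c : ℝ) (hcb : c < b)
    (hhb : ContDiffOn ℝ 2 hb (Ioi 0)) (hhc : ContDiffOn ℝ 2 hc (Ioi 0))
    (hodeb : ∀ x ∈ Ioi (0:ℝ),
      (1/2) * (σ x)^2 * deriv (deriv hb) x + k x * deriv hb x - r x * hb x
        = -lam * hb x)
    (hodec : ∀ x ∈ Ioi (0:ℝ),
      (1/2) * (σ x)^2 * deriv (deriv hc) x + k x * deriv hc x - r x * hc x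
        = -lam * hc x)
    (hb1 : hb ξ = 1) (hc1 : hc ξ = 1)
    (hb' : deriv hb ξ = b) (hc' : deriv hc ξ = c) :
    (∀ x, ξ < x → hc x < hb x) ∧ (∀ x, 0 < x → x < ξ → hb x < hc x) :=
  order_by_initial_derivative_general σ k r lam ξ hξ hr hlam hb hc b c hcb hhb hhc hodeb hodec hb1
    hc1 hb' hc'
end

section
/- Suppose r ≥ 0, λ < inf r, both solutions below solve (1/2)σ²h'' + kh' - rh = -λh with value 1 at ξ, and every solution with initial derivative strictly above M_λ (resp. strictly below m_λ) fails to be positive, where M_λ := sup{h'(ξ) : h solves the ODE, h > 0, h(ξ) = 1} and m_λ is the corresponding infimum, both assumed finite. Then the solution h_M with h_M(ξ)=1, h_M'(ξ)=M_λ satisfies h_M' > 0 on (0,∞), and the solution h_m with h_m'(ξ)=m_λ satisfies h_m' < 0 on (0,∞). -/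
/-!
Write `s = exp (-∫_ξ 2k/σ²)` for the scale density. The equation reads
`(h'/s)' = 2 (r - λ) h / (σ² s)`, so for a positive solution `h` the ratio `h'/s` is strictly
increasing. Reduction of order turns `h` into the solutions `h · (1 + D ∫_ξ^x s/h²)`, which have
value `1` and slope `h'(ξ) + D` at `ξ`, and are positive as soon as `1 + D ∫_ξ^x s/h² > 0`.
If `h'(x₀) ≤ 0`, then `h'/s ≤ c < 0` on `(0, a]` for some `a`, so `s/h² ≤ (1/h)'/|c|` there and
`∫_ξ^x s/h²` is bounded below: some `D > 0` gives a positive solution of larger slope, so `h`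
cannot be `h_M`. Symmetrically, `h'(x₀) ≥ 0` bounds the integral above near `∞`, and some `D < 0`
gives a positive solution of smaller slope than `h`, so `h` cannot be `h_m`.
-/

open Set

lemma hasDerivAt_intervalIntegral_of_continuousOn_Ioi {f : ℝ → ℝ} {a ξ x : ℝ}
    (hf : ContinuousOn f (Ioi a)) (hξ : a < ξ) (hx : a < x) :
    HasDerivAt (fun y => ∫ t in ξ..y, f t) (f x) x :=
  intervalIntegral.integral_hasDerivAt_right
    (hf.mono fun _ ht => (lt_min hξ hx).trans_le ht.1).intervalIntegrable
    (hf.stronglyMeasurableAtFilter isOpen_Ioi x hx) (hf.continuousAt (Ioi_mem_nhds hx))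

lemma ContDiffOn.hasDerivAt_of_isOpen {f : ℝ → ℝ} {s : Set ℝ} {n : WithTop ℕ∞}
    (hf : ContDiffOn ℝ n f s) (hs : IsOpen s) (hn : n ≠ 0) {x : ℝ} (hx : x ∈ s) :
    HasDerivAt f (deriv f x) x :=
  ((hf.contDiffAt (hs.mem_nhds hx)).differentiableAt hn).hasDerivAt

lemma contDiffOn_succ_of_hasDerivAt {f f' : ℝ → ℝ} {s : Set ℝ} {n : ℕ} (hs : IsOpen s)
    (hf : ∀ x ∈ s, HasDerivAt f (f' x) x) (hf' : ContDiffOn ℝ n f' s) :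
    ContDiffOn ℝ (n + 1) f s :=
  (contDiffOn_succ_iff_deriv_of_isOpen hs).2
    ⟨fun x hx => (hf x hx).differentiableAt.differentiableWithinAt, by simp,
      hf'.congr fun x hx => (hf x hx).deriv⟩

lemma strictMonoOn_Ioi_of_hasDerivAt_pos {f f' : ℝ → ℝ} {a : ℝ}
    (hf : ∀ x ∈ Ioi a, HasDerivAt f (f' x) x) (hf' : ∀ x ∈ Ioi a, 0 < f' x) :
    StrictMonoOn f (Ioi a) :=
  strictMonoOn_of_hasDerivWithinAt_pos (convex_Ioi a)
    (fun x hx => (hf x hx).continuousAt.continuousWithinAt)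
    (fun x hx => (hf x (interior_subset hx)).hasDerivWithinAt)
    fun x hx => hf' x (interior_subset hx)

lemma sub_le_sub_of_hasDerivAt_le {f g f' g' : ℝ → ℝ} {a b : ℝ} (hab : a ≤ b)
    (hf : ∀ x ∈ Icc a b, HasDerivAt f (f' x) x) (hg : ∀ x ∈ Icc a b, HasDerivAt g (g' x) x)
    (hle : ∀ x ∈ Ioo a b, f' x ≤ g' x) : f b - f a ≤ g b - g a := by
  have hmono : MonotoneOn (fun x => g x - f x) (Icc a b) := by
    refine monotoneOn_of_hasDerivWithinAt_nonneg (f' := fun x => g' x - f' x) (convex_Icc a b)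
      (fun x hx => ((hg x hx).sub (hf x hx)).continuousAt.continuousWithinAt)
      (fun x hx => ?_) (fun x hx => ?_) <;> rw [interior_Icc] at hx
    · exact ((hg x (Ioo_subset_Icc_self hx)).sub (hf x (Ioo_subset_Icc_self hx))).hasDerivWithinAt
    · exact sub_nonneg.2 (hle x hx)
  have := hmono (left_mem_Icc.2 hab) (right_mem_Icc.2 hab) hab
  linarith

lemma exists_pos_forall_one_add_mul_pos {α : Type*} {f : α → ℝ} {s : Set α}
    (hf : BddBelow (f '' s)) : ∃ D > 0, ∀ x ∈ s, 0 < 1 + D * f x := by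
  obtain ⟨L, hL⟩ := hf
  have hD : 0 < (1 + |L|)⁻¹ := by positivity
  refine ⟨(1 + |L|)⁻¹, hD, fun x hx => ?_⟩
  have hLx : L ≤ f x := hL (mem_image_of_mem f hx)
  have hcancel : (1 + |L|)⁻¹ * (1 + |L|) = 1 := inv_mul_cancel₀ (by positivity)
  nlinarith [neg_abs_le L]

lemma exists_neg_forall_one_add_mul_pos {α : Type*} {f : α → ℝ} {s : Set α}
    (hf : BddAbove (f '' s)) : ∃ D < 0, ∀ x ∈ s, 0 < 1 + D * f x := by
  obtain ⟨U, hU⟩ := hf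
  obtain ⟨D, hD, hpos⟩ := exists_pos_forall_one_add_mul_pos (f := fun x => -f x) (s := s)
    ⟨-U, by rintro _ ⟨x, hx, rfl⟩; exact neg_le_neg (hU (mem_image_of_mem f hx))⟩
  exact ⟨-D, neg_neg_of_pos hD, fun x hx => by simpa using hpos x hx⟩

noncomputable def scaleDensity (β : ℝ → ℝ) (ξ x : ℝ) : ℝ :=
  Real.exp (-∫ t in ξ..x, β t)

noncomputable def reductionIntegral (β : ℝ → ℝ) (ξ : ℝ) (h : ℝ → ℝ) (x : ℝ) : ℝ :=
  ∫ t in ξ..x, scaleDensity β ξ t / h t ^ 2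

section ScaleDensity

variable {β h : ℝ → ℝ} {ξ : ℝ}

lemma scaleDensity_pos (x : ℝ) : 0 < scaleDensity β ξ x := Real.exp_pos _

@[simp]
lemma scaleDensity_self : scaleDensity β ξ ξ = 1 := by simp [scaleDensity]

@[simp]
lemma reductionIntegral_self : reductionIntegral β ξ h ξ = 0 := intervalIntegral.integral_same

lemma hasDerivAt_scaleDensity (hβ : ContinuousOn β (Ioi 0)) (hξ : 0 < ξ) {x : ℝ}
    (hx : 0 < x) : HasDerivAt (scaleDensity β ξ) (-β x * scaleDensity β ξ x) x := by
  rw [mul_comm]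
  exact (hasDerivAt_intervalIntegral_of_continuousOn_Ioi hβ hξ hx).neg.exp

lemma contDiffOn_scaleDensity (hβ : ContinuousOn β (Ioi 0)) (hξ : 0 < ξ) :
    ContDiffOn ℝ 1 (scaleDensity β ξ) (Ioi 0) := by
  have hs : ContinuousOn (scaleDensity β ξ) (Ioi 0) := fun x hx =>
    (hasDerivAt_scaleDensity hβ hξ hx).continuousAt.continuousWithinAt
  simpa using contDiffOn_succ_of_hasDerivAt (n := 0) isOpen_Ioi
    (fun x hx => hasDerivAt_scaleDensity hβ hξ hx) (contDiffOn_zero.2 (hβ.neg.mul hs))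

lemma hasDerivAt_reductionIntegral (hβ : ContinuousOn β (Ioi 0)) (hξ : 0 < ξ)
    (hh : ContinuousOn h (Ioi 0)) (hh0 : ∀ x ∈ Ioi (0:ℝ), h x ≠ 0) {x : ℝ} (hx : 0 < x) :
    HasDerivAt (reductionIntegral β ξ h) (scaleDensity β ξ x / h x ^ 2) x :=
  hasDerivAt_intervalIntegral_of_continuousOn_Ioi
    ((contDiffOn_scaleDensity hβ hξ).continuousOn.div (hh.pow 2)
      fun y hy => pow_ne_zero 2 (hh0 y hy)) hξ hx

lemma strictMonoOn_reductionIntegral (hβ : ContinuousOn β (Ioi 0)) (hξ : 0 < ξ)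
    (hh : ContinuousOn h (Ioi 0)) (hh0 : ∀ x ∈ Ioi (0:ℝ), h x ≠ 0) :
    StrictMonoOn (reductionIntegral β ξ h) (Ioi 0) :=
  strictMonoOn_Ioi_of_hasDerivAt_pos (fun _ hx => hasDerivAt_reductionIntegral hβ hξ hh hh0 hx)
    fun x hx => div_pos (scaleDensity_pos x) (pow_two_pos_of_ne_zero (hh0 x hx))

lemma contDiffOn_reductionIntegral (hβ : ContinuousOn β (Ioi 0)) (hξ : 0 < ξ)
    (hh : ContDiffOn ℝ 1 h (Ioi 0)) (hh0 : ∀ x ∈ Ioi (0:ℝ), h x ≠ 0) :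
    ContDiffOn ℝ 2 (reductionIntegral β ξ h) (Ioi 0) :=
  contDiffOn_succ_of_hasDerivAt (n := 1) isOpen_Ioi
    (fun _ hx => hasDerivAt_reductionIntegral hβ hξ hh.continuousOn hh0 hx)
    ((contDiffOn_scaleDensity hβ hξ).div (hh.pow 2) fun x hx => pow_ne_zero 2 (hh0 x hx))

end ScaleDensity

noncomputable def reductionOfOrder (β : ℝ → ℝ) (ξ : ℝ) (h : ℝ → ℝ) (D x : ℝ) : ℝ :=
  h x * (1 + D * reductionIntegral β ξ h x)

section ReductionOfOrder

variable {β γ h : ℝ → ℝ} {ξ D : ℝ}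

@[simp]
lemma reductionOfOrder_self : reductionOfOrder β ξ h D ξ = h ξ := by
  simp [reductionOfOrder]

lemma hasDerivAt_reductionOfOrder (hβ : ContinuousOn β (Ioi 0)) (hξ : 0 < ξ)
    (hh : ContDiffOn ℝ 1 h (Ioi 0)) (hh0 : ∀ x ∈ Ioi (0:ℝ), h x ≠ 0) {x : ℝ} (hx : 0 < x) :
    HasDerivAt (reductionOfOrder β ξ h D)
      (deriv h x * (1 + D * reductionIntegral β ξ h x) + D * scaleDensity β ξ x / h x) x := by
  refine ((hh.hasDerivAt_of_isOpen isOpen_Ioi one_ne_zero hx).mul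
    (((hasDerivAt_reductionIntegral hβ hξ hh.continuousOn hh0 hx).const_mul D).const_add 1))
    |>.congr_deriv ?_
  field_simp [hh0 x hx]

lemma deriv_reductionOfOrder_self (hβ : ContinuousOn β (Ioi 0)) (hξ : 0 < ξ)
    (hh : ContDiffOn ℝ 1 h (Ioi 0)) (hh0 : ∀ x ∈ Ioi (0:ℝ), h x ≠ 0) :
    deriv (reductionOfOrder β ξ h D) ξ = deriv h ξ + D / h ξ := by
  simp [(hasDerivAt_reductionOfOrder hβ hξ hh hh0 hξ).deriv]

lemma deriv_deriv_reductionOfOrder (hβ : ContinuousOn β (Ioi 0)) (hξ : 0 < ξ)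
    (hh : ContDiffOn ℝ 2 h (Ioi 0)) (hh0 : ∀ x ∈ Ioi (0:ℝ), h x ≠ 0) {x : ℝ} (hx : 0 < x) :
    deriv (deriv (reductionOfOrder β ξ h D)) x =
      deriv (deriv h) x * (1 + D * reductionIntegral β ξ h x)
        - D * β x * scaleDensity β ξ x / h x := by
  have hh1 : ContDiffOn ℝ 1 h (Ioi 0) := hh.of_le (by norm_num)
  have hderiv : deriv (reductionOfOrder β ξ h D) =ᶠ[nhds x] fun y =>
      deriv h y * (1 + D * reductionIntegral β ξ h y) + D * scaleDensity β ξ y / h y :=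
    Filter.eventuallyEq_of_mem (Ioi_mem_nhds hx) fun y hy =>
      (hasDerivAt_reductionOfOrder hβ hξ hh1 hh0 hy).deriv
  rw [hderiv.deriv_eq]
  have hh' := (hh.deriv_of_isOpen isOpen_Ioi (by norm_num)).hasDerivAt_of_isOpen isOpen_Ioi
    one_ne_zero hx
  refine (hh'.mul
    (((hasDerivAt_reductionIntegral hβ hξ hh.continuousOn hh0 hx).const_mul D).const_add 1)
    |>.add (((hasDerivAt_scaleDensity hβ hξ hx).const_mul D).div
      (hh1.hasDerivAt_of_isOpen isOpen_Ioi one_ne_zero hx) (hh0 x hx))).deriv.trans ?_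
  field_simp [hh0 x hx]
  ring

lemma contDiffOn_reductionOfOrder (hβ : ContinuousOn β (Ioi 0)) (hξ : 0 < ξ)
    (hh : ContDiffOn ℝ 2 h (Ioi 0)) (hh0 : ∀ x ∈ Ioi (0:ℝ), h x ≠ 0) :
    ContDiffOn ℝ 2 (reductionOfOrder β ξ h D) (Ioi 0) :=
  hh.mul (contDiffOn_const.add (contDiffOn_const.mul
    (contDiffOn_reductionIntegral hβ hξ (hh.of_le (by norm_num)) hh0)))

lemma reductionOfOrder_ode (hβ : ContinuousOn β (Ioi 0)) (hξ : 0 < ξ)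
    (hh : ContDiffOn ℝ 2 h (Ioi 0)) (hh0 : ∀ x ∈ Ioi (0:ℝ), h x ≠ 0)
    (hode : ∀ x ∈ Ioi (0:ℝ), deriv (deriv h) x + β x * deriv h x = γ x * h x)
    {x : ℝ} (hx : 0 < x) :
    deriv (deriv (reductionOfOrder β ξ h D)) x + β x * deriv (reductionOfOrder β ξ h D) x =
      γ x * reductionOfOrder β ξ h D x := by
  rw [deriv_deriv_reductionOfOrder hβ hξ hh hh0 hx,
    (hasDerivAt_reductionOfOrder hβ hξ (hh.of_le (by norm_num)) hh0 hx).deriv, reductionOfOrder]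
  linear_combination (1 + D * reductionIntegral β ξ h x) * hode x hx

end ReductionOfOrder

section Bounds

variable {β h : ℝ → ℝ} {ξ : ℝ}

lemma strictMonoOn_deriv_div_scaleDensity (hβ : ContinuousOn β (Ioi 0)) (hξ : 0 < ξ)
    (hh : ContDiffOn ℝ 2 h (Ioi 0))
    (hpos : ∀ x ∈ Ioi (0:ℝ), 0 < deriv (deriv h) x + β x * deriv h x) :
    StrictMonoOn (fun x => deriv h x / scaleDensity β ξ x) (Ioi 0) := by
  have hψ : ∀ x ∈ Ioi (0:ℝ), HasDerivAt (fun x => deriv h x / scaleDensity β ξ x)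
      ((deriv (deriv h) x + β x * deriv h x) / scaleDensity β ξ x) x := fun x hx =>
    (((hh.deriv_of_isOpen isOpen_Ioi (by norm_num)).hasDerivAt_of_isOpen isOpen_Ioi one_ne_zero
      hx).div (hasDerivAt_scaleDensity hβ hξ hx) (scaleDensity_pos x).ne').congr_deriv
      (by field_simp [(scaleDensity_pos (β := β) (ξ := ξ) x).ne']; ring)
  exact strictMonoOn_Ioi_of_hasDerivAt_pos hψ fun x hx => div_pos (hpos x hx) (scaleDensity_pos x)

/-- The hypothesis `1 ≤ (h'/s)/c` covers both `h'/s ≥ c > 0` and `h'/s ≤ c < 0`; either way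
`s/h² ≤ -(1/h)'/c`. -/
lemma reductionIntegral_sub_le (hβ : ContinuousOn β (Ioi 0)) (hξ : 0 < ξ)
    (hh : ContDiffOn ℝ 1 h (Ioi 0)) (hh0 : ∀ x ∈ Ioi (0:ℝ), h x ≠ 0) {c x y : ℝ} (hx : 0 < x)
    (hxy : x ≤ y) (hc : ∀ t ∈ Ioo x y, 1 ≤ deriv h t / scaleDensity β ξ t / c) :
    reductionIntegral β ξ h y - reductionIntegral β ξ h x ≤ c⁻¹ * ((h x)⁻¹ - (h y)⁻¹) := by
  have hpos : ∀ t ∈ Icc x y, 0 < t := fun t ht => hx.trans_le ht.1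
  have key := sub_le_sub_of_hasDerivAt_le (g := fun t => -c⁻¹ * (h t)⁻¹) hxy
    (fun t ht => hasDerivAt_reductionIntegral hβ hξ hh.continuousOn hh0 (hpos t ht))
    (fun t ht => ((hh.hasDerivAt_of_isOpen isOpen_Ioi one_ne_zero (hpos t ht)).inv
      (hh0 t (hpos t ht))).const_mul _) fun t ht => ?_
  · linarith
  have hst : scaleDensity β ξ t ≤ deriv h t / c :=
    (one_le_div (scaleDensity_pos t)).1 (div_right_comm (deriv h t) _ c ▸ hc t ht)
  calc scaleDensity β ξ t / h t ^ 2 ≤ deriv h t / c / h t ^ 2 :=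
        div_le_div_of_nonneg_right hst (sq_nonneg _)
    _ = _ := by ring

lemma bddBelow_reductionIntegral (hβ : ContinuousOn β (Ioi 0)) (hξ : 0 < ξ)
    (hh : ContDiffOn ℝ 1 h (Ioi 0)) (hpos : ∀ x ∈ Ioi (0:ℝ), 0 < h x)
    (hψ : StrictMonoOn (fun x => deriv h x / scaleDensity β ξ x) (Ioi 0)) {x₀ : ℝ}
    (hx₀ : 0 < x₀) (hd : deriv h x₀ ≤ 0) : BddBelow (reductionIntegral β ξ h '' Ioi 0) := by
  have hh0 : ∀ x ∈ Ioi (0:ℝ), h x ≠ 0 := fun x hx => (hpos x hx).ne'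
  set a := x₀ / 2
  have ha : 0 < a := half_pos hx₀
  set c := deriv h a / scaleDensity β ξ a
  have hc : c < 0 := (hψ ha hx₀ (half_lt_self hx₀)).trans_le
    (div_nonpos_of_nonpos_of_nonneg hd (scaleDensity_pos x₀).le)
  have hca : c⁻¹ * (h a)⁻¹ ≤ 0 := mul_nonpos_of_nonpos_of_nonneg (inv_nonpos.2 hc.le)
    (inv_nonneg.2 (hpos a ha).le)
  refine ⟨reductionIntegral β ξ h a + c⁻¹ * (h a)⁻¹, ?_⟩
  rintro _ ⟨x, hx, rfl⟩
  rcases le_total x a with hxa | hax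
  · have hcx : c⁻¹ * (h x)⁻¹ ≤ 0 := mul_nonpos_of_nonpos_of_nonneg (inv_nonpos.2 hc.le)
      (inv_nonneg.2 (hpos x hx).le)
    have := reductionIntegral_sub_le hβ hξ hh hh0 hx hxa fun t ht =>
      (one_le_div_of_neg hc).2 (hψ.monotoneOn (hx.trans ht.1) ha ht.2.le)
    rw [mul_sub] at this
    linarith
  · have := (strictMonoOn_reductionIntegral hβ hξ hh.continuousOn hh0).monotoneOn ha hx hax
    linarith

lemma bddAbove_reductionIntegral (hβ : ContinuousOn β (Ioi 0)) (hξ : 0 < ξ)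
    (hh : ContDiffOn ℝ 1 h (Ioi 0)) (hpos : ∀ x ∈ Ioi (0:ℝ), 0 < h x)
    (hψ : StrictMonoOn (fun x => deriv h x / scaleDensity β ξ x) (Ioi 0)) {x₀ : ℝ}
    (hx₀ : 0 < x₀) (hd : 0 ≤ deriv h x₀) : BddAbove (reductionIntegral β ξ h '' Ioi 0) := by
  have hh0 : ∀ x ∈ Ioi (0:ℝ), h x ≠ 0 := fun x hx => (hpos x hx).ne'
  set b := x₀ + 1
  have hb : 0 < b := by positivity
  set c := deriv h b / scaleDensity β ξ b
  have hc : 0 < c := (div_nonneg hd (scaleDensity_pos x₀).le).trans_lt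
    (hψ hx₀ hb (lt_add_one x₀))
  have hcb : 0 ≤ c⁻¹ * (h b)⁻¹ := by have := hpos b hb; positivity
  refine ⟨reductionIntegral β ξ h b + c⁻¹ * (h b)⁻¹, ?_⟩
  rintro _ ⟨x, hx, rfl⟩
  rcases le_total b x with hbx | hxb
  · have hcx : 0 ≤ c⁻¹ * (h x)⁻¹ := by have := hpos x hx; positivity
    have := reductionIntegral_sub_le hβ hξ hh hh0 hb hbx fun t ht =>
      (one_le_div hc).2 (hψ.monotoneOn hb (hb.trans ht.1) ht.1.le)
    rw [mul_sub] at this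
    linarith
  · have := (strictMonoOn_reductionIntegral hβ hξ hh.continuousOn hh0).monotoneOn hx hb hxb
    linarith

end Bounds

def SolvesEigenEquation (σ k r : ℝ → ℝ) (lam : ℝ) (h : ℝ → ℝ) : Prop :=
  ∀ x ∈ Ioi (0:ℝ),
    (1/2) * (σ x)^2 * deriv (deriv h) x + k x * deriv h x - r x * h x = -lam * h x

def positiveSolutionSlopes (σ k r : ℝ → ℝ) (lam ξ : ℝ) : Set ℝ :=
  {b | ∃ h : ℝ → ℝ, ContDiffOn ℝ 2 h (Ioi 0) ∧ SolvesEigenEquation σ k r lam h ∧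
    (∀ x ∈ Ioi (0:ℝ), 0 < h x) ∧ h ξ = 1 ∧ deriv h ξ = b}

noncomputable def driftRatio (σ k : ℝ → ℝ) (x : ℝ) : ℝ := 2 * k x / σ x ^ 2

section EigenEquation

variable {σ k r h : ℝ → ℝ} {lam ξ : ℝ}

lemma continuousOn_driftRatio (hσc : ContinuousOn σ (Ioi 0)) (hkc : ContinuousOn k (Ioi 0))
    (hσ : ∀ x ∈ Ioi (0:ℝ), 0 < σ x) : ContinuousOn (driftRatio σ k) (Ioi 0) :=
  (continuousOn_const.mul hkc).div (hσc.pow 2) fun x hx => pow_ne_zero 2 (hσ x hx).ne'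

lemma solvesEigenEquation_iff (hσ : ∀ x ∈ Ioi (0:ℝ), 0 < σ x) :
    SolvesEigenEquation σ k r lam h ↔ ∀ x ∈ Ioi (0:ℝ),
      deriv (deriv h) x + driftRatio σ k x * deriv h x = 2 * (r x - lam) / σ x ^ 2 * h x := by
  refine forall₂_congr fun x hx => ?_
  have := (hσ x hx).ne'
  rw [driftRatio]
  constructor <;> intro e <;> field_simp at e ⊢ <;> linarith

lemma SolvesEigenEquation.strictMonoOn_deriv_div_scaleDensity
    (hode : SolvesEigenEquation σ k r lam h) (hσc : ContinuousOn σ (Ioi 0))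
    (hkc : ContinuousOn k (Ioi 0)) (hσ : ∀ x ∈ Ioi (0:ℝ), 0 < σ x) (hξ : 0 < ξ)
    (hq : ∀ x ∈ Ioi (0:ℝ), lam < r x) (hh : ContDiffOn ℝ 2 h (Ioi 0))
    (hpos : ∀ x ∈ Ioi (0:ℝ), 0 < h x) :
    StrictMonoOn (fun x => deriv h x / scaleDensity (driftRatio σ k) ξ x) (Ioi 0) :=
  _root_.strictMonoOn_deriv_div_scaleDensity (continuousOn_driftRatio hσc hkc hσ) hξ hh
    fun x hx => by
      have := sub_pos.2 (hq x hx)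
      have := hσ x hx
      have := hpos x hx
      rw [(solvesEigenEquation_iff hσ).1 hode x hx]
      positivity

lemma SolvesEigenEquation.deriv_add_mem_positiveSolutionSlopes
    (hode : SolvesEigenEquation σ k r lam h) (hσc : ContinuousOn σ (Ioi 0))
    (hkc : ContinuousOn k (Ioi 0)) (hσ : ∀ x ∈ Ioi (0:ℝ), 0 < σ x) (hξ : 0 < ξ)
    (hh : ContDiffOn ℝ 2 h (Ioi 0)) (hpos : ∀ x ∈ Ioi (0:ℝ), 0 < h x) (h1 : h ξ = 1)
    {D : ℝ} (hD : ∀ x ∈ Ioi (0:ℝ), 0 < 1 + D * reductionIntegral (driftRatio σ k) ξ h x) :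
    deriv h ξ + D ∈ positiveSolutionSlopes σ k r lam ξ := by
  have hβ := continuousOn_driftRatio hσc hkc hσ
  have hh0 : ∀ x ∈ Ioi (0:ℝ), h x ≠ 0 := fun x hx => (hpos x hx).ne'
  refine ⟨reductionOfOrder (driftRatio σ k) ξ h D, contDiffOn_reductionOfOrder hβ hξ hh hh0,
    (solvesEigenEquation_iff hσ).2 fun x hx =>
      reductionOfOrder_ode hβ hξ hh hh0 ((solvesEigenEquation_iff hσ).1 hode) hx,
    fun x hx => mul_pos (hpos x hx) (hD x hx), by simp [h1], ?_⟩
  rw [deriv_reductionOfOrder_self hβ hξ (hh.of_le (by norm_num)) hh0, h1, div_one]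

lemma SolvesEigenEquation.exists_gt_mem_positiveSolutionSlopes
    (hode : SolvesEigenEquation σ k r lam h) (hσc : ContinuousOn σ (Ioi 0))
    (hkc : ContinuousOn k (Ioi 0)) (hσ : ∀ x ∈ Ioi (0:ℝ), 0 < σ x) (hξ : 0 < ξ)
    (hq : ∀ x ∈ Ioi (0:ℝ), lam < r x) (hh : ContDiffOn ℝ 2 h (Ioi 0))
    (hpos : ∀ x ∈ Ioi (0:ℝ), 0 < h x) (h1 : h ξ = 1) {x₀ : ℝ} (hx₀ : 0 < x₀)
    (hd : deriv h x₀ ≤ 0) : ∃ b ∈ positiveSolutionSlopes σ k r lam ξ, deriv h ξ < b := by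
  obtain ⟨D, hD, hDI⟩ := exists_pos_forall_one_add_mul_pos <|
    bddBelow_reductionIntegral (continuousOn_driftRatio hσc hkc hσ) hξ (hh.of_le (by norm_num))
      hpos (hode.strictMonoOn_deriv_div_scaleDensity hσc hkc hσ hξ hq hh hpos) hx₀ hd
  exact ⟨_, hode.deriv_add_mem_positiveSolutionSlopes hσc hkc hσ hξ hh hpos h1 hDI,
    lt_add_of_pos_right _ hD⟩

lemma SolvesEigenEquation.exists_lt_mem_positiveSolutionSlopes
    (hode : SolvesEigenEquation σ k r lam h) (hσc : ContinuousOn σ (Ioi 0))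
    (hkc : ContinuousOn k (Ioi 0)) (hσ : ∀ x ∈ Ioi (0:ℝ), 0 < σ x) (hξ : 0 < ξ)
    (hq : ∀ x ∈ Ioi (0:ℝ), lam < r x) (hh : ContDiffOn ℝ 2 h (Ioi 0))
    (hpos : ∀ x ∈ Ioi (0:ℝ), 0 < h x) (h1 : h ξ = 1) {x₀ : ℝ} (hx₀ : 0 < x₀)
    (hd : 0 ≤ deriv h x₀) : ∃ b ∈ positiveSolutionSlopes σ k r lam ξ, b < deriv h ξ := by
  obtain ⟨D, hD, hDI⟩ := exists_neg_forall_one_add_mul_pos <|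
    bddAbove_reductionIntegral (continuousOn_driftRatio hσc hkc hσ) hξ (hh.of_le (by norm_num))
      hpos (hode.strictMonoOn_deriv_div_scaleDensity hσc hkc hσ hξ hq hh hpos) hx₀ hd
  exact ⟨_, hode.deriv_add_mem_positiveSolutionSlopes hσc hkc hσ hξ hh hpos h1 hDI,
    add_lt_of_neg_right _ hD⟩

end EigenEquation

theorem extremal_solutions_monotone_general
    (σ k r : ℝ → ℝ) (lam : ℝ) (ξ : ℝ) (hξ : 0 < ξ)
    (hσc : ContinuousOn σ (Ioi 0)) (hkc : ContinuousOn k (Ioi 0))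
    (hσ : ∀ x ∈ Ioi (0:ℝ), 0 < σ x)
    (hr : ∀ x ∈ Ioi (0:ℝ), 0 ≤ r x)
    (hlam : lam < ⨅ x : Ioi (0:ℝ), r x)
    (M m : ℝ)
    (hM : IsGreatest {b : ℝ | ∃ h : ℝ → ℝ, ContDiffOn ℝ 2 h (Ioi 0) ∧
      (∀ x ∈ Ioi (0:ℝ),
        (1/2) * (σ x)^2 * deriv (deriv h) x + k x * deriv h x - r x * h x
          = -lam * h x) ∧ (∀ x ∈ Ioi (0:ℝ), 0 < h x) ∧ h ξ = 1 ∧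
      deriv h ξ = b} M)
    (hm : IsLeast {b : ℝ | ∃ h : ℝ → ℝ, ContDiffOn ℝ 2 h (Ioi 0) ∧
      (∀ x ∈ Ioi (0:ℝ),
        (1/2) * (σ x)^2 * deriv (deriv h) x + k x * deriv h x - r x * h x
          = -lam * h x) ∧ (∀ x ∈ Ioi (0:ℝ), 0 < h x) ∧ h ξ = 1 ∧
      deriv h ξ = b} m)
    (hM' hm' : ℝ → ℝ)
    (hhM : ContDiffOn ℝ 2 hM' (Ioi 0)) (hhm : ContDiffOn ℝ 2 hm' (Ioi 0))
    (hodeM : ∀ x ∈ Ioi (0:ℝ),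
      (1/2) * (σ x)^2 * deriv (deriv hM') x + k x * deriv hM' x - r x * hM' x
        = -lam * hM' x)
    (hodem : ∀ x ∈ Ioi (0:ℝ),
      (1/2) * (σ x)^2 * deriv (deriv hm') x + k x * deriv hm' x - r x * hm' x
        = -lam * hm' x)
    (hposM : ∀ x ∈ Ioi (0:ℝ), 0 < hM' x) (hposm : ∀ x ∈ Ioi (0:ℝ), 0 < hm' x)
    (hM1 : hM' ξ = 1) (hm1 : hm' ξ = 1)
    (hMd : deriv hM' ξ = M) (hmd : deriv hm' ξ = m) :
    (∀ x ∈ Ioi (0:ℝ), 0 < deriv hM' x) ∧ (∀ x ∈ Ioi (0:ℝ), deriv hm' x < 0) := by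
  have hq : ∀ x ∈ Ioi (0:ℝ), lam < r x := fun x hx =>
    hlam.trans_le (ciInf_le ⟨0, by rintro _ ⟨y, rfl⟩; exact hr y y.2⟩ (⟨x, hx⟩ : Ioi (0:ℝ)))
  refine ⟨fun x hx => ?_, fun x hx => ?_⟩
  · by_contra! hx'
    obtain ⟨b, hb, hMb⟩ := SolvesEigenEquation.exists_gt_mem_positiveSolutionSlopes hodeM hσc
      hkc hσ hξ hq hhM hposM hM1 hx hx'
    exact (hM.2 hb).not_gt (hMd ▸ hMb)
  · by_contra! hx'
    obtain ⟨b, hb, hbm⟩ := SolvesEigenEquation.exists_lt_mem_positiveSolutionSlopes hodem hσc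
      hkc hσ hξ hq hhm hposm hm1 hx hx'
    exact (hm.2 hb).not_gt (hmd ▸ hbm)

/-- The extremal positive solutions `h_M` (with maximal initial derivative `M_λ`)
and `h_m` (with minimal initial derivative `m_λ`) are strictly increasing and
strictly decreasing respectively. -/
theorem extremal_solutions_monotone
    (σ k r : ℝ → ℝ) (lam : ℝ) (ξ : ℝ) (hξ : 0 < ξ)
    (hσc : ContinuousOn σ (Ioi 0)) (hkc : ContinuousOn k (Ioi 0))
    (hrc : ContinuousOn r (Ioi 0))
    (hσ : ∀ x ∈ Ioi (0:ℝ), 0 < σ x)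
    (hr : ∀ x ∈ Ioi (0:ℝ), 0 ≤ r x)
    (hlam : lam < ⨅ x : Ioi (0:ℝ), r x)
    (M m : ℝ)
    (hM : IsGreatest {b : ℝ | ∃ h : ℝ → ℝ, ContDiffOn ℝ 2 h (Ioi 0) ∧
      (∀ x ∈ Ioi (0:ℝ),
        (1/2) * (σ x)^2 * deriv (deriv h) x + k x * deriv h x - r x * h x
          = -lam * h x) ∧ (∀ x ∈ Ioi (0:ℝ), 0 < h x) ∧ h ξ = 1 ∧
      deriv h ξ = b} M)
    (hm : IsLeast {b : ℝ | ∃ h : ℝ → ℝ, ContDiffOn ℝ 2 h (Ioi 0) ∧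
      (∀ x ∈ Ioi (0:ℝ),
        (1/2) * (σ x)^2 * deriv (deriv h) x + k x * deriv h x - r x * h x
          = -lam * h x) ∧ (∀ x ∈ Ioi (0:ℝ), 0 < h x) ∧ h ξ = 1 ∧
      deriv h ξ = b} m)
    (hM' hm' : ℝ → ℝ)
    (hhM : ContDiffOn ℝ 2 hM' (Ioi 0)) (hhm : ContDiffOn ℝ 2 hm' (Ioi 0))
    (hodeM : ∀ x ∈ Ioi (0:ℝ),
      (1/2) * (σ x)^2 * deriv (deriv hM') x + k x * deriv hM' x - r x * hM' x
        = -lam * hM' x)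
    (hodem : ∀ x ∈ Ioi (0:ℝ),
      (1/2) * (σ x)^2 * deriv (deriv hm') x + k x * deriv hm' x - r x * hm' x
        = -lam * hm' x)
    (hposM : ∀ x ∈ Ioi (0:ℝ), 0 < hM' x) (hposm : ∀ x ∈ Ioi (0:ℝ), 0 < hm' x)
    (hM1 : hM' ξ = 1) (hm1 : hm' ξ = 1)
    (hMd : deriv hM' ξ = M) (hmd : deriv hm' ξ = m) :
    (∀ x ∈ Ioi (0:ℝ), 0 < deriv hM' x) ∧ (∀ x ∈ Ioi (0:ℝ), deriv hm' x < 0) :=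
  extremal_solutions_monotone_general σ k r lam ξ hξ hσc hkc hσ hr hlam M m hM hm hM' hm' hhM hhm
    hodeM hodem hposM hposm hM1 hm1 hMd hmd
end

section
/- Let σ, k be continuous on (0,∞) with σ > 0 and γ(x) = exp(-∫_ξ^x 2k(s)/σ²(s) ds). Suppose λ > r (constant r), and h is a positive C² solution of (1/2)σ²h'' + kh' - rh = -λh with h(ξ) = 1. If ∫_ξ^∞ γ(x) dx = ∞, then h'(x) > 0 for all x > 0. -/
open Set MeasureTheory intervalIntegral Filter

/-!
Multiplying the equation by the integrating factor `1/γ = exp(∫ 2k/σ²)` turns it into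
`(h'/γ)' = 2(r - λ) h / (σ² γ) < 0`, so `h'/γ` is strictly decreasing. If `h'(x₀) ≤ 0`, then
beyond any `x₁ > x₀` we get `h' ≤ -c γ` with `c = -h'(x₁)/γ(x₁) > 0`; integrating,
`c ∫_{x₁}^T γ ≤ h(x₁) - h(T) < h(x₁)`, so `γ` would be integrable at `∞`.
-/

lemma hasDerivAt_integral_of_continuousOn {U : Set ℝ} (hU : IsOpen U) [U.OrdConnected]
    {q : ℝ → ℝ} (hq : ContinuousOn q U) {ξ x : ℝ} (hξ : ξ ∈ U) (hx : x ∈ U) :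
    HasDerivAt (fun y => ∫ s in ξ..y, q s) (q x) x :=
  integral_hasDerivAt_right ((hq.mono (OrdConnected.uIcc_subset ‹_› hξ hx)).intervalIntegrable)
    (hq.stronglyMeasurableAtFilter hU x hx) ((hq x hx).continuousAt (hU.mem_nhds hx))

lemma strictAntiOn_mul_exp_of_hasDerivAt {U : Set ℝ} (hU : Convex ℝ U) {u u' F q : ℝ → ℝ}
    (hu : ∀ x ∈ U, HasDerivAt u (u' x) x) (hF : ∀ x ∈ U, HasDerivAt F (q x) x)
    (hneg : ∀ x ∈ U, u' x + q x * u x < 0) :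
    StrictAntiOn (fun x => u x * Real.exp (F x)) U := by
  have hderiv : ∀ x ∈ U, HasDerivAt (fun x => u x * Real.exp (F x))
      ((u' x + q x * u x) * Real.exp (F x)) x := fun x hx =>
    ((hu x hx).mul (hF x hx).exp).congr_deriv (by ring)
  refine strictAntiOn_of_hasDerivWithinAt_neg hU
    (fun x hx => (hderiv x hx).continuousAt.continuousWithinAt)
    (fun x hx => (hderiv x (interior_subset hx)).hasDerivWithinAt) (fun x hx => ?_)
  exact mul_neg_of_neg_of_pos (hneg x (interior_subset hx)) (Real.exp_pos _)

lemma integrableOn_Ioi_of_hasDerivAt_le_neg_mul {f f' g : ℝ → ℝ} {a c : ℝ} (hc : 0 < c)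
    (hfc : ContinuousOn f (Ici a)) (hf : ∀ x ∈ Ioi a, HasDerivAt f (f' x) x)
    (hf0 : ∀ x ∈ Ici a, 0 ≤ f x) (hgc : ContinuousOn g (Ici a)) (hg0 : ∀ x ∈ Ici a, 0 ≤ g x)
    (hle : ∀ x ∈ Ioi a, f' x ≤ -(c * g x)) :
    IntegrableOn g (Ioi a) := by
  have hgi : ∀ T, IntegrableOn g (Icc a T) := fun T =>
    (hgc.mono Icc_subset_Ici_self).integrableOn_Icc
  refine integrableOn_Ioi_of_intervalIntegral_norm_bounded (f a / c) a
    (fun T => (hgi T).mono_set Ioc_subset_Icc_self) tendsto_id ?_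
  filter_upwards [eventually_ge_atTop a] with T hT
  have hdecrease : f T - f a ≤ ∫ x in a..T, -(c * g x) :=
    sub_le_integral_of_hasDeriv_right_of_le hT (hfc.mono Icc_subset_Ici_self)
      (fun x hx => (hf x hx.1).hasDerivWithinAt) ((hgi T).const_mul c).neg
      (fun x hx => hle x hx.1)
  have hnorm : ∫ x in a..T, ‖g x‖ = ∫ x in a..T, g x :=
    integral_congr fun x hx => Real.norm_of_nonneg (hg0 x (by rw [uIcc_of_le hT] at hx; exact hx.1))
  rw [hnorm, le_div_iff₀ hc]
  rw [intervalIntegral.integral_neg, intervalIntegral.integral_const_mul] at hdecrease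
  nlinarith [hf0 T hT]

lemma integrableOn_Ioi_exp_neg_of_strictAntiOn {f f' F : ℝ → ℝ} {a b : ℝ} (hab : a < b)
    (hf : ∀ x ∈ Ici a, HasDerivAt f (f' x) x) (hF : ContinuousOn F (Ici a))
    (hf0 : ∀ x ∈ Ici a, 0 ≤ f x) (hφ : StrictAntiOn (fun x => f' x * Real.exp (F x)) (Ici a))
    (ha : f' a ≤ 0) :
    IntegrableOn (fun x => Real.exp (-F x)) (Ioi b) := by
  have hsub : Ici b ⊆ Ici a := Ici_subset_Ici.2 hab.le
  have hb : f' b * Real.exp (F b) < 0 := (hφ self_mem_Ici (hsub self_mem_Ici) hab).trans_le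
    (mul_nonpos_of_nonpos_of_nonneg ha (Real.exp_pos _).le)
  refine integrableOn_Ioi_of_hasDerivAt_le_neg_mul (neg_pos.2 hb)
    (fun x hx => (hf x (hsub hx)).continuousAt.continuousWithinAt)
    (fun x hx => hf x (hsub (mem_Ici_of_Ioi hx))) (fun x hx => hf0 x (hsub hx))
    (hF.mono hsub).neg.rexp (fun x _ => (Real.exp_pos _).le) fun x hx => ?_
  calc f' x = f' x * Real.exp (F x) * Real.exp (-F x) := by
        rw [mul_assoc, ← Real.exp_add, add_neg_cancel, Real.exp_zero, mul_one]
    _ ≤ f' b * Real.exp (F b) * Real.exp (-F x) := mul_le_mul_of_nonneg_right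
        (hφ (hsub self_mem_Ici) (hsub (mem_Ici_of_Ioi hx)) hx).le (Real.exp_pos _).le
    _ = _ := by ring

lemma integrableOn_Ioi_of_continuousOn_Icc {g : ℝ → ℝ} {a b : ℝ} (hab : a ≤ b)
    (hg : ContinuousOn g (Icc a b)) (hb : IntegrableOn g (Ioi b)) : IntegrableOn g (Ioi a) :=
  Ioc_union_Ioi_eq_Ioi hab ▸ (hg.integrableOn_Icc.mono_set Ioc_subset_Icc_self).union hb

theorem increasing_of_scale_divergent_general
    (σ k : ℝ → ℝ) (r lam ξ : ℝ) (hξ : 0 < ξ) (hlam : r < lam)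
    (hσc : ContinuousOn σ (Ioi 0)) (hkc : ContinuousOn k (Ioi 0))
    (hσ : ∀ x ∈ Ioi (0:ℝ), 0 < σ x)
    (γ : ℝ → ℝ)
    (hγ : ∀ x, γ x = Real.exp (-∫ s in ξ..x, 2 * k s / (σ s)^2))
    (hdiv : ¬ IntegrableOn γ (Ioi ξ) volume)
    (h : ℝ → ℝ) (hh : ContDiffOn ℝ 2 h (Ioi 0))
    (hpos : ∀ x ∈ Ioi (0:ℝ), 0 < h x)
    (hode : ∀ x ∈ Ioi (0:ℝ),
      (1/2) * (σ x)^2 * deriv (deriv h) x + k x * deriv h x - r * h x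
        = -lam * h x) :
    ∀ x ∈ Ioi (0:ℝ), 0 < deriv h x := by
  set F : ℝ → ℝ := fun x => ∫ s in ξ..x, 2 * k s / σ s ^ 2
  have hF : ∀ x ∈ Ioi (0:ℝ), HasDerivAt F (2 * k x / σ x ^ 2) x := fun x hx =>
    hasDerivAt_integral_of_continuousOn isOpen_Ioi
      ((continuousOn_const.mul hkc).div (hσc.pow 2) fun y hy => (pow_pos (hσ y hy) 2).ne') hξ hx
  have hFc : ContinuousOn F (Ioi 0) := fun x hx => (hF x hx).continuousAt.continuousWithinAt
  obtain rfl : γ = fun x => Real.exp (-F x) := funext hγ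
  have hh' : ∀ x ∈ Ioi (0:ℝ), HasDerivAt h (deriv h x) x := fun x hx =>
    ((hh.differentiableOn two_ne_zero).differentiableAt (isOpen_Ioi.mem_nhds hx)).hasDerivAt
  have hh'' : ∀ x ∈ Ioi (0:ℝ), HasDerivAt (deriv h) (deriv (deriv h) x) x := fun x hx =>
    (((hh.deriv_of_isOpen isOpen_Ioi le_rfl).differentiableOn one_ne_zero).differentiableAt
      (isOpen_Ioi.mem_nhds hx)).hasDerivAt
  have hφ := strictAntiOn_mul_exp_of_hasDerivAt (convex_Ioi 0) hh'' hF fun x hx => by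
    have hσx := hσ x hx
    have hrate : deriv (deriv h) x + 2 * k x / σ x ^ 2 * deriv h x
        = 2 * (r - lam) * h x / σ x ^ 2 := by
      field_simp
      linarith [hode x hx]
    rw [hrate]
    exact div_neg_of_neg_of_pos (by nlinarith [hpos x hx]) (by positivity)
  by_contra! ⟨x₀, hx₀, hx₀le⟩
  have hsub : Ici x₀ ⊆ Ioi 0 := Ici_subset_Ioi.2 hx₀
  have hξ₁ : ξ < max x₀ ξ + 1 := (le_max_right _ _).trans_lt (lt_add_one _)
  have htail : IntegrableOn (fun x => Real.exp (-F x)) (Ioi (max x₀ ξ + 1)) :=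
    integrableOn_Ioi_exp_neg_of_strictAntiOn ((le_max_left _ _).trans_lt (lt_add_one _))
      (fun x hx => hh' x (hsub hx)) (hFc.mono hsub) (fun x hx => (hpos x (hsub hx)).le)
      (hφ.mono hsub) hx₀le
  exact hdiv (integrableOn_Ioi_of_continuousOn_Icc hξ₁.le
    ((hFc.mono (Icc_subset_Ioi_iff hξ₁.le |>.2 hξ)).neg.rexp) htail)

/-- If the scale density `γ` has divergent integral at `∞`, then every positive
solution of `(1/2)σ²h'' + kh' - rh = -λh` (constant rate `r`, `λ > r`) with
`h(ξ) = 1` is strictly increasing. -/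
theorem increasing_of_scale_divergent
    (σ k : ℝ → ℝ) (r lam ξ : ℝ) (hξ : 0 < ξ) (hlam : r < lam)
    (hσc : ContinuousOn σ (Ioi 0)) (hkc : ContinuousOn k (Ioi 0))
    (hσ : ∀ x ∈ Ioi (0:ℝ), 0 < σ x)
    (γ : ℝ → ℝ)
    (hγ : ∀ x, γ x = Real.exp (-∫ s in ξ..x, 2 * k s / (σ s)^2))
    (hdiv : ¬ IntegrableOn γ (Ioi ξ) volume)
    (h : ℝ → ℝ) (hh : ContDiffOn ℝ 2 h (Ioi 0))
    (hpos : ∀ x ∈ Ioi (0:ℝ), 0 < h x) (h1 : h ξ = 1)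
    (hode : ∀ x ∈ Ioi (0:ℝ),
      (1/2) * (σ x)^2 * deriv (deriv h) x + k x * deriv h x - r * h x
        = -lam * h x) :
    ∀ x ∈ Ioi (0:ℝ), 0 < deriv h x :=
  increasing_of_scale_divergent_general σ k r lam ξ hξ hlam hσc hkc hσ γ hγ hdiv h hh hpos hode
end

section
/- Let σ, k be continuous on (0,∞) with σ > 0, γ(x) = exp(-∫_ξ^x 2k(s)/σ²(s) ds), constant rate r, λ > r, and let h be a positive increasing C² solution of (1/2)σ²h'' + kh' - rh = -λh with h(ξ) = 1. If ∫_ξ^∞ γ(x)∫_ξ^x 1/(σ²(s)γ(s)) ds dx = ∞ (i.e., ∞ is inaccessible), then ∫_ξ^∞ γ(x) dx = ∞. -/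
/-!
Since `γ' = -(2k/σ²) γ`, the equation for `h` takes the Sturm–Liouville form
`(h'/γ)' = -2(λ - r) h / (σ²γ)`. Integrating from `ξ` and using `h'(x)/γ(x) > 0` gives
`2(λ - r) ∫_ξ^x h/(σ²γ) ≤ h'(ξ)`, and since `h ≥ h(ξ) = 1` on `[ξ, ∞)` the inner integral
`∫_ξ^x 1/(σ²γ)` stays below `h'(ξ) / (2(λ - r))`. So the integrand of the inaccessibility
integral is dominated by a multiple of `γ`, and `γ` cannot be integrable.
-/

open Set MeasureTheory intervalIntegral

lemma hasDerivAt_integral_of_continuousOn_Ioi {f : ℝ → ℝ} {a ξ x : ℝ}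
    (hf : ContinuousOn f (Ioi a)) (hξ : a < ξ) (hx : a < x) :
    HasDerivAt (fun u => ∫ s in ξ..u, f s) (f x) x :=
  integral_hasDerivAt_right
    (hf.mono (ordConnected_Ioi.uIcc_subset hξ hx)).intervalIntegrable
    (hf.stronglyMeasurableAtFilter isOpen_Ioi x hx) (hf.continuousAt (isOpen_Ioi.mem_nhds hx))

lemma hasDerivAt_exp_neg_integral {f : ℝ → ℝ} {a ξ x : ℝ}
    (hf : ContinuousOn f (Ioi a)) (hξ : a < ξ) (hx : a < x) :
    HasDerivAt (fun u => Real.exp (-∫ s in ξ..u, f s))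
      (-f x * Real.exp (-∫ s in ξ..x, f s)) x :=
  (hasDerivAt_integral_of_continuousOn_Ioi hf hξ hx).neg.exp.congr_deriv (mul_comm _ _)

lemma ContDiffOn.hasDerivAt_deriv {f : ℝ → ℝ} {s : Set ℝ} {x : ℝ} (hf : ContDiffOn ℝ 2 f s)
    (hs : IsOpen s) (hx : x ∈ s) : HasDerivAt (deriv f) (deriv (deriv f) x) x :=
  (((hf.deriv_of_isOpen hs (by norm_num)).differentiableOn one_ne_zero).differentiableAt
    (hs.mem_nhds hx)).hasDerivAt

lemma mul_integral_le_of_hasDerivAt_neg_mul {F f : ℝ → ℝ} {a b c : ℝ}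
    (hF : ∀ s ∈ uIcc a b, HasDerivAt F (-(c * f s)) s) (hf : IntervalIntegrable f volume a b)
    (hFb : 0 ≤ F b) : c * ∫ s in a..b, f s ≤ F a := by
  have hFTC := integral_eq_sub_of_hasDerivAt hF (hf.const_mul c).neg
  rw [intervalIntegral.integral_neg, intervalIntegral.integral_const_mul] at hFTC
  linarith

lemma norm_integral_one_div_le_of_hasDerivAt {ρ h G : ℝ → ℝ} {a b c : ℝ} (hab : a ≤ b)
    (hc : 0 < c) (hρ : ∀ s ∈ Icc a b, 0 < ρ s) (hρc : ContinuousOn ρ (Icc a b))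
    (hhc : ContinuousOn h (Icc a b)) (h1 : ∀ s ∈ Icc a b, 1 ≤ h s)
    (hG : ∀ s ∈ Icc a b, HasDerivAt G (-(c * (h s / ρ s))) s) (hGb : 0 ≤ G b) :
    ‖∫ s in a..b, 1 / ρ s‖ ≤ G a / c := by
  have hρ0 : ∀ s ∈ Icc a b, ρ s ≠ 0 := fun s hs => (hρ s hs).ne'
  have hint : IntervalIntegrable (fun s => h s / ρ s) volume a b :=
    (hhc.div hρc hρ0).intervalIntegrable_of_Icc hab
  rw [Real.norm_of_nonneg (integral_nonneg hab fun s hs => (one_div_pos.2 (hρ s hs)).le),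
    le_div_iff₀ hc, mul_comm]
  calc c * ∫ s in a..b, 1 / ρ s
      ≤ c * ∫ s in a..b, h s / ρ s :=
        mul_le_mul_of_nonneg_left (integral_mono_on hab
          ((continuousOn_const.div hρc hρ0).intervalIntegrable_of_Icc hab) hint
          fun s hs => div_le_div_of_nonneg_right (h1 s hs) (hρ s hs).le) hc.le
    _ ≤ G a := mul_integral_le_of_hasDerivAt_neg_mul (uIcc_of_le hab ▸ hG) hint hGb

lemma hasDerivAt_div_of_ode {σ k h h' γ : ℝ → ℝ} {r lam x h'' : ℝ} (hσ : σ x ≠ 0)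
    (hγ : γ x ≠ 0) (hγ' : HasDerivAt γ (-(2 * k x / σ x ^ 2) * γ x) x)
    (hh' : HasDerivAt h' h'' x)
    (hode : 1 / 2 * σ x ^ 2 * h'' + k x * h' x - r * h x = -lam * h x) :
    HasDerivAt (fun y => h' y / γ y) (-(2 * (lam - r) * (h x / (σ x ^ 2 * γ x)))) x := by
  refine (hh'.div hγ' hγ).congr_deriv ?_
  field_simp
  linear_combination 2 * hode

theorem scale_divergent_of_increasing_general
    (σ k : ℝ → ℝ) (r lam ξ : ℝ) (hξ : 0 < ξ) (hlam : r < lam)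
    (hσc : ContinuousOn σ (Ioi 0)) (hkc : ContinuousOn k (Ioi 0))
    (hσ : ∀ x ∈ Ioi (0:ℝ), 0 < σ x)
    (γ : ℝ → ℝ)
    (hγ : ∀ x, γ x = Real.exp (-∫ s in ξ..x, 2 * k s / (σ s)^2))
    (hinacc : ¬ IntegrableOn
      (fun x => γ x * ∫ s in ξ..x, 1 / ((σ s)^2 * γ s)) (Ioi ξ) volume)
    (h : ℝ → ℝ) (hh : ContDiffOn ℝ 2 h (Ioi 0))
    (h1 : h ξ = 1)
    (hinc : ∀ x ∈ Ioi (0:ℝ), 0 < deriv h x)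
    (hode : ∀ x ∈ Ioi (0:ℝ),
      (1/2) * (σ x)^2 * deriv (deriv h) x + k x * deriv h x - r * h x
        = -lam * h x) :
    ¬ IntegrableOn γ (Ioi ξ) volume := by
  intro hγint
  have hγpos (x : ℝ) : 0 < γ x := hγ x ▸ Real.exp_pos _
  have hγ' : ∀ x ∈ Ioi (0:ℝ), HasDerivAt γ (-(2 * k x / σ x ^ 2) * γ x) x := fun x hx => by
    rw [funext hγ]
    exact hasDerivAt_exp_neg_integral ((continuousOn_const.mul hkc).div (hσc.pow 2)
      fun s hs => (pow_pos (hσ s hs) 2).ne') hξ hx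
  have hσγpos : ∀ s ∈ Ioi (0:ℝ), 0 < σ s ^ 2 * γ s := fun s hs =>
    mul_pos (pow_pos (hσ s hs) 2) (hγpos s)
  have hσγc : ContinuousOn (fun s => σ s ^ 2 * γ s) (Ioi 0) :=
    (hσc.pow 2).mul fun x hx => (hγ' x hx).continuousAt.continuousWithinAt
  have hmono : MonotoneOn h (Ioi 0) := (strictMonoOn_of_deriv_pos (convex_Ioi 0)
    hh.continuousOn (by rwa [interior_Ioi])).monotoneOn
  have hbound : ∀ x ∈ Ioi ξ,
      ‖∫ s in ξ..x, 1 / (σ s ^ 2 * γ s)‖ ≤ deriv h ξ / γ ξ / (2 * (lam - r)) := by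
    intro x hx
    have hsub : Icc ξ x ⊆ Ioi 0 := fun s hs => hξ.trans_le hs.1
    refine norm_integral_one_div_le_of_hasDerivAt hx.le (by linarith)
      (fun s hs => hσγpos s (hsub hs)) (hσγc.mono hsub)
      (hh.continuousOn.mono hsub) (fun s hs => h1 ▸ hmono hξ (hsub hs) hs.1)
      (fun s hs => hasDerivAt_div_of_ode (hσ s (hsub hs)).ne' (hγpos s).ne' (hγ' s (hsub hs))
        (hh.hasDerivAt_deriv isOpen_Ioi (hsub hs)) (hode s (hsub hs)))
      (div_pos (hinc x (hξ.trans hx)) (hγpos x)).le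
  have hJc : ContinuousOn (fun x => ∫ s in ξ..x, 1 / (σ s ^ 2 * γ s)) (Ioi ξ) := fun x hx =>
    (hasDerivAt_integral_of_continuousOn_Ioi (continuousOn_const.div hσγc
      fun s hs => (hσγpos s hs).ne') hξ (hξ.trans hx)).continuousAt.continuousWithinAt
  exact hinacc (hγint.mul_bdd (hJc.aestronglyMeasurable measurableSet_Ioi)
    ((ae_restrict_iff' measurableSet_Ioi).2 (Filter.Eventually.of_forall hbound)))

/-- Converse: if `∞` is inaccessible and there exists a positive increasing
solution, then the scale integral diverges. -/
theorem scale_divergent_of_increasing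
    (σ k : ℝ → ℝ) (r lam ξ : ℝ) (hξ : 0 < ξ) (hlam : r < lam)
    (hσc : ContinuousOn σ (Ioi 0)) (hkc : ContinuousOn k (Ioi 0))
    (hσ : ∀ x ∈ Ioi (0:ℝ), 0 < σ x)
    (γ : ℝ → ℝ)
    (hγ : ∀ x, γ x = Real.exp (-∫ s in ξ..x, 2 * k s / (σ s)^2))
    (hinacc : ¬ IntegrableOn
      (fun x => γ x * ∫ s in ξ..x, 1 / ((σ s)^2 * γ s)) (Ioi ξ) volume)
    (h : ℝ → ℝ) (hh : ContDiffOn ℝ 2 h (Ioi 0))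
    (hpos : ∀ x ∈ Ioi (0:ℝ), 0 < h x) (h1 : h ξ = 1)
    (hinc : ∀ x ∈ Ioi (0:ℝ), 0 < deriv h x)
    (hode : ∀ x ∈ Ioi (0:ℝ),
      (1/2) * (σ x)^2 * deriv (deriv h) x + k x * deriv h x - r * h x
        = -lam * h x) :
    ¬ IntegrableOn γ (Ioi ξ) volume :=
  scale_divergent_of_increasing_general σ k r lam ξ hξ hlam hσc hkc hσ γ hγ hinacc h hh h1 hinc hode
end

section
/- Black-Scholes admissibility: with constants σ > 0, r, δ, p(λ) as above, and s > 0: if 2(r-δ) < σ², then p(λ) > 0 for all λ ≤ λ̄ = (1/2)(σ/2 - (r-δ)/σ)² + r; if 2(r-δ) ≥ σ², then p(λ) > 0 if and only if λ < r. -/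
/-!
Write `p λ = a + √(a² + t)` with `a = 1/2 - (r-δ)/σ²` and `t = 2(r-λ)/σ²`. When `a > 0` this is
positive whatever `t` is. When `a ≤ 0`, squaring `-a < √(a² + t)` (both sides nonnegative) shows
that `p λ > 0` exactly when `t > 0`, i.e. when `λ < r`.
-/

theorem add_sqrt_sq_add_pos {a : ℝ} (ha : 0 < a) (t : ℝ) : 0 < a + √(a ^ 2 + t) := by
  positivity

theorem add_sqrt_sq_add_pos_iff {a : ℝ} (ha : a ≤ 0) (t : ℝ) :
    0 < a + √(a ^ 2 + t) ↔ 0 < t := by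
  rw [← neg_lt_iff_pos_add', Real.lt_sqrt (neg_nonneg.mpr ha), neg_sq, lt_add_iff_pos_right]

/-- Black–Scholes admissibility: if `2(r-δ) < σ²` then `p(λ) > 0` for all
`λ ≤ λ̄`; if `2(r-δ) ≥ σ²` then `p(λ) > 0` iff `λ < r`. -/
theorem black_scholes_admissible
    (σ r δ : ℝ) (hσ : 0 < σ)
    (p : ℝ → ℝ)
    (hp : ∀ lam, p lam = 1/2 - (r - δ)/σ^2 +
      Real.sqrt ((1/2 - (r - δ)/σ^2)^2 + 2*(r - lam)/σ^2)) :
    (2*(r - δ) < σ^2 →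
      ∀ lam ≤ (1/2) * (σ/2 - (r - δ)/σ)^2 + r, 0 < p lam) ∧
    (σ^2 ≤ 2*(r - δ) →
      ∀ lam ≤ (1/2) * (σ/2 - (r - δ)/σ)^2 + r, (0 < p lam ↔ lam < r)) := by
  have hσ2 : 0 < σ ^ 2 := by positivity
  have ha : 0 < 1/2 - (r - δ)/σ^2 ↔ 2*(r - δ) < σ^2 := by
    rw [sub_pos, div_lt_iff₀ hσ2]
    constructor <;> intro <;> linarith
  refine ⟨fun h lam _ => ?_, fun h lam _ => ?_⟩
  · rw [hp]
    exact add_sqrt_sq_add_pos (ha.2 h) _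
  · rw [hp, add_sqrt_sq_add_pos_iff (not_lt.1 (mt ha.1 h.not_gt)), div_pos_iff_of_pos_right hσ2]
    constructor <;> intro <;> linarith
end

section
/- Boundary dichotomy at 0: with γ(x) = exp(-∫_ξ^x 2k(s)/σ²(s) ds) and Q(x) = (2/(σ²(x)γ(x)))∫_ξ^x γ(s) ds, suppose Q ∈ L¹(0,ξ) (entrance boundary at 0) and γ ∈ L¹(0,ξ). Then ∫_0^ξ 2/(σ²(x)γ(x)) dx < ∞ and consequently R(x) = γ(x)∫_ξ^x 2/(σ²(s)γ(s)) ds is in L¹(0,ξ). -/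
open Set MeasureTheory intervalIntegral

/-- Continuity of the primitive `x ↦ ∫ s in ξ..x, h s` on `(0,∞)` for `h`
continuous on `(0,∞)`. -/
private lemma primCont (ξ : ℝ) (hξ : 0 < ξ) {h : ℝ → ℝ}
    (hc : ContinuousOn h (Ioi 0)) :
    ContinuousOn (fun x => ∫ s in ξ..x, h s) (Ioi 0) := by
  intro x hx
  have hsub : Set.uIcc ξ x ⊆ Ioi 0 := fun y hy =>
    lt_of_lt_of_le (lt_min hξ hx) hy.1
  have hD : HasDerivAt (fun u => ∫ s in ξ..u, h s) (h x) x := by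
    refine intervalIntegral.integral_hasDerivAt_right
      ((hc.mono hsub).intervalIntegrable) ?_ (hc.continuousAt (Ioi_mem_nhds hx))
    exact hc.stronglyMeasurableAtFilter isOpen_Ioi _ hx
  exact hD.continuousAt.continuousWithinAt

/-- Boundary dichotomy at `0`: if `Q ∈ L¹(0,ξ)` and `γ ∈ L¹(0,ξ)`, then
`2/(σ²γ) ∈ L¹(0,ξ)` and `R ∈ L¹(0,ξ)`. -/
theorem boundary_dichotomy_zero
    (σ k : ℝ → ℝ) (ξ : ℝ) (hξ : 0 < ξ)
    (hσc : ContinuousOn σ (Ioi 0)) (hkc : ContinuousOn k (Ioi 0))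
    (hσ : ∀ x ∈ Ioi (0:ℝ), 0 < σ x)
    (γ Q R : ℝ → ℝ)
    (hγ : ∀ x, γ x = Real.exp (-∫ s in ξ..x, 2 * k s / (σ s)^2))
    (hQ : ∀ x ∈ Ioi (0:ℝ), Q x = (2 / ((σ x)^2 * γ x)) * ∫ s in ξ..x, γ s)
    (hR : ∀ x ∈ Ioi (0:ℝ), R x = γ x * ∫ s in ξ..x, 2 / ((σ s)^2 * γ s))
    (hQint : IntegrableOn Q (Ioo 0 ξ) volume)
    (hγint : IntegrableOn γ (Ioo 0 ξ) volume) :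
    IntegrableOn (fun x => 2 / ((σ x)^2 * γ x)) (Ioo 0 ξ) volume ∧
    IntegrableOn R (Ioo 0 ξ) volume := by
  have hγpos : ∀ x, 0 < γ x := fun x => by rw [hγ]; exact Real.exp_pos _
  -- continuity of γ on (0,∞)
  have hgc : ContinuousOn (fun s => 2 * k s / (σ s)^2) (Ioi 0) := by
    refine ContinuousOn.div (continuousOn_const.mul hkc) (hσc.pow 2) ?_
    intro x hx; exact pow_ne_zero _ (hσ x hx).ne'
  have hγcont : ContinuousOn γ (Ioi 0) := by
    have h2 : ContinuousOn
        (fun x => Real.exp (-∫ s in ξ..x, 2 * k s / (σ s)^2)) (Ioi 0) :=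
      Real.continuous_exp.comp_continuousOn (primCont ξ hξ hgc).neg
    exact h2.congr (fun x _ => hγ x)
  set f : ℝ → ℝ := fun x => 2 / ((σ x)^2 * γ x) with hfdef
  have hQ' : ∀ x ∈ Ioi (0:ℝ), Q x = f x * ∫ s in ξ..x, γ s := by
    intro x hx; simp only [hfdef]; exact hQ x hx
  have hR' : ∀ x ∈ Ioi (0:ℝ), R x = γ x * ∫ s in ξ..x, f s := by
    intro x hx; simp only [hfdef]; exact hR x hx
  have hfc : ContinuousOn f (Ioi 0) := by
    refine ContinuousOn.div continuousOn_const ((hσc.pow 2).mul hγcont) ?_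
    intro x hx
    exact (mul_pos (pow_pos (hσ x hx) 2) (hγpos x)).ne'
  have hfpos : ∀ x ∈ Ioi (0:ℝ), 0 < f x := fun x hx =>
    div_pos two_pos (mul_pos (pow_pos (hσ x hx) 2) (hγpos x))
  have hγii : ∀ a b, a ∈ Ioi (0:ℝ) → b ∈ Ioi (0:ℝ) →
      IntervalIntegrable γ volume a b := by
    intro a b ha hb
    exact ((hγcont.mono (fun y hy => lt_of_lt_of_le (lt_min ha hb) hy.1)).intervalIntegrable)
  have hhalf : (0:ℝ) < ξ/2 := half_pos hξ
  set c : ℝ := ∫ s in (ξ/2)..ξ, γ s with hcdef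
  have hcpos : 0 < c := by
    refine intervalIntegral.intervalIntegral_pos_of_pos_on
      (hγii _ _ hhalf hξ) (fun x _ => hγpos x) (by linarith)
  -- the key bound near 0
  have hbound : ∀ x ∈ Ioo (0:ℝ) (ξ/2), f x ≤ c⁻¹ * |Q x| := by
    intro x hx
    have hx0 : (0:ℝ) < x := hx.1
    have hint : c ≤ ∫ s in x..ξ, γ s := by
      have hadd : (∫ s in x..(ξ/2), γ s) + (∫ s in (ξ/2)..ξ, γ s)
          = ∫ s in x..ξ, γ s :=
        intervalIntegral.integral_add_adjacent_intervals
          (hγii _ _ hx0 hhalf) (hγii _ _ hhalf hξ)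
      have h1 : 0 ≤ ∫ s in x..(ξ/2), γ s :=
        intervalIntegral.integral_nonneg hx.2.le (fun u _ => (hγpos u).le)
      rw [hcdef]; linarith
    have hQx2 : Q x = -(f x * ∫ s in x..ξ, γ s) := by
      rw [hQ' x hx0, intervalIntegral.integral_symm x ξ]; ring
    have hInn : 0 ≤ ∫ s in x..ξ, γ s := le_trans hcpos.le hint
    have habs : |Q x| = f x * ∫ s in x..ξ, γ s := by
      rw [hQx2, abs_neg, abs_of_nonneg (mul_nonneg (hfpos x hx0).le hInn)]
    rw [habs]
    calc f x = c⁻¹ * (f x * c) := by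
          rw [mul_comm (f x) c, inv_mul_cancel_left₀ hcpos.ne']
      _ ≤ c⁻¹ * (f x * ∫ s in x..ξ, γ s) := by
          have h3 : f x * c ≤ f x * ∫ s in x..ξ, γ s :=
            mul_le_mul_of_nonneg_left hint (hfpos x hx0).le
          exact mul_le_mul_of_nonneg_left h3 (inv_nonneg.mpr hcpos.le)
  -- integrability of f near 0
  have hf1 : IntegrableOn f (Ioo 0 (ξ/2)) volume := by
    refine Integrable.mono'
      (((hQint.mono_set (Ioo_subset_Ioo le_rfl (by linarith))).norm).const_mul c⁻¹) ?_ ?_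
    · exact (hfc.mono (fun y hy => hy.1)).aestronglyMeasurable measurableSet_Ioo
    · filter_upwards [ae_restrict_mem measurableSet_Ioo] with x hx
      rw [Real.norm_eq_abs, abs_of_nonneg (hfpos x hx.1).le, Real.norm_eq_abs]
      exact hbound x hx
  -- integrability of f away from 0
  have hf2 : IntegrableOn f (Icc (ξ/2) ξ) volume :=
    ContinuousOn.integrableOn_Icc
      (hfc.mono (fun y hy => lt_of_lt_of_le hhalf hy.1))
  have hfInt : IntegrableOn f (Ioo 0 ξ) volume := by
    refine (hf1.union hf2).mono_set ?_
    intro y hy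
    rcases lt_or_ge y (ξ/2) with h | h
    · exact Or.inl ⟨hy.1, h⟩
    · exact Or.inr ⟨h, hy.2.le⟩
  refine ⟨hfInt, ?_⟩
  -- now bound R by C * γ
  set C : ℝ := ∫ x in Ioo 0 ξ, f x with hCdef
  have hRbound : ∀ x ∈ Ioo (0:ℝ) ξ, |R x| ≤ C * γ x := by
    intro x hx
    have hx0 : (0:ℝ) < x := hx.1
    have hInn : 0 ≤ ∫ s in x..ξ, f s :=
      intervalIntegral.integral_nonneg hx.2.le
        (fun u hu => (hfpos u (lt_of_lt_of_le hx0 hu.1)).le)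
    have hI : (∫ s in x..ξ, f s) ≤ C := by
      rw [intervalIntegral.integral_of_le hx.2.le,
        MeasureTheory.integral_Ioc_eq_integral_Ioo, hCdef]
      refine setIntegral_mono_set hfInt ?_ ?_
      · filter_upwards [ae_restrict_mem measurableSet_Ioo] with y hy
        exact (hfpos y hy.1).le
      · exact HasSubset.Subset.eventuallyLE (Ioo_subset_Ioo hx0.le le_rfl)
    have hRx : R x = -(γ x * ∫ s in x..ξ, f s) := by
      rw [hR' x hx0, intervalIntegral.integral_symm x ξ]; ring
    have habs : |R x| = γ x * ∫ s in x..ξ, f s := by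
      rw [hRx, abs_neg, abs_of_nonneg (mul_nonneg (hγpos x).le hInn)]
    rw [habs, mul_comm C (γ x)]
    exact mul_le_mul_of_nonneg_left hI (hγpos x).le
  refine Integrable.mono' (hγint.const_mul C) ?_ ?_
  · have hRc : ContinuousOn R (Ioo 0 ξ) := by
      have h1 : ContinuousOn (fun x => γ x * ∫ s in ξ..x, f s) (Ioi 0) :=
        hγcont.mul (primCont ξ hξ hfc)
      exact (h1.mono (fun y hy => hy.1)).congr (fun x hx => hR' x hx.1)
    exact hRc.aestronglyMeasurable measurableSet_Ioo
  · filter_upwards [ae_restrict_mem measurableSet_Ioo] with x hx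
    rw [Real.norm_eq_abs]
    exact hRbound x hx
end

section
/- Natural boundary at ∞ and unbounded eigenfunctions: let γ(x) = exp(-∫_ξ^x 2k(s)/σ²(s) ds) and suppose ∫_ξ^∞ (2/(σ²(s)γ(s)))∫_ξ^s γ(x) dx ds = ∞ (∞ is a natural boundary). Let h̄ be a positive increasing C² solution of (1/2)σ²h̄'' + kh̄' - rh̄ = -λ̄h̄ (constant r, λ̄ > r) with h̄(ξ) = 1, satisfying C := h̄'(ξ) - 2(λ̄ - r)∫_ξ^∞ h̄(s)/(σ²(s)γ(s)) ds ≥ 0 and h̄'(x) = γ(x)(C + 2(λ̄-r)∫_x^∞ h̄(s)/(σ²(s)γ(s)) ds). Then lim_{x→∞} h̄(x) = ∞. -/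
/-!
Write `g = 1 / (σ² γ)`. Since `h̄` increases from `h̄(ξ) = 1`, the representation of `h̄'` with
`C ≥ 0` gives `h̄'(x) ≥ 2(λ̄ - r) γ(x) ∫_x^∞ g`. By Tonelli,
`∫_ξ^∞ γ(x) ∫_x^∞ g(s) ds dx = ∫_ξ^∞ g(s) ∫_ξ^s γ(x) dx ds`, which is infinite because `∞` is a
natural boundary. So `h̄'` is not integrable on `(ξ, ∞)`, and a monotone function with
non-integrable derivative tends to `∞`.
-/

open Set MeasureTheory intervalIntegral Filter
open scoped ENNReal

theorem continuousOn_primitive_Ici {f : ℝ → ℝ} {a : ℝ} (hf : ContinuousOn f (Ici a)) :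
    ContinuousOn (fun x => ∫ t in a..x, f t) (Ici a) := by
  intro x (hx : a ≤ x)
  have hI : uIcc a (x + 1) = Ici a ∩ Iic (x + 1) := by
    rw [uIcc_of_le (by linarith), Ici_inter_Iic]
  have hint : IntegrableOn f (uIcc a (x + 1)) :=
    (hf.mono (hI ▸ inter_subset_left)).integrableOn_compact isCompact_uIcc
  refine (continuousOn_primitive_interval hint x ?_).mono_of_mem_nhdsWithin ?_
  · rw [hI]; exact ⟨hx, by simp⟩
  · rw [hI]; exact inter_mem_nhdsWithin _ (Iic_mem_nhds (by linarith))

theorem lintegral_Ioi_mul_lintegral_Ioi_swap {f g : ℝ → ℝ≥0∞} {a : ℝ}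
    (hf : AEMeasurable f (volume.restrict (Ioi a)))
    (hg : AEMeasurable g (volume.restrict (Ioi a))) :
    ∫⁻ t in Ioi a, f t * ∫⁻ s in Ioi t, g s = ∫⁻ s in Ioi a, g s * ∫⁻ t in Ioo a s, f t := by
  set F : ℝ → ℝ → ℝ≥0∞ := fun t s => (Ioi t).indicator (fun s => f t * g s) s
  have hF : AEMeasurable (Function.uncurry F)
      ((volume.restrict (Ioi a)).prod (volume.restrict (Ioi a))) := by
    have : Function.uncurry F = {p : ℝ × ℝ | p.1 < p.2}.indicator (fun p => f p.1 * g p.2) := by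
      ext ⟨t, s⟩; simp [F, Function.uncurry, indicator_apply]
    rw [this]
    exact (hf.comp_fst.mul hg.comp_snd).indicator (measurableSet_lt measurable_fst measurable_snd)
  calc ∫⁻ t in Ioi a, f t * ∫⁻ s in Ioi t, g s
      = ∫⁻ t in Ioi a, ∫⁻ s in Ioi a, F t s := by
        refine setLIntegral_congr_fun measurableSet_Ioi fun t (ht : a < t) => ?_
        rw [lintegral_indicator measurableSet_Ioi, Measure.restrict_restrict measurableSet_Ioi,
          inter_eq_left.mpr (Ioi_subset_Ioi ht.le),
          lintegral_const_mul'' _ (hg.mono_set (Ioi_subset_Ioi ht.le))]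
    _ = ∫⁻ s in Ioi a, ∫⁻ t in Ioi a, F t s := lintegral_lintegral_swap hF
    _ = ∫⁻ s in Ioi a, g s * ∫⁻ t in Ioo a s, f t := by
        refine setLIntegral_congr_fun measurableSet_Ioi fun s hs => ?_
        have : ∀ t, F t s = (Iio s).indicator (fun t => f t * g s) t := fun t => by
          simp [F, indicator_apply]
        rw [lintegral_congr this, lintegral_indicator measurableSet_Iio,
          Measure.restrict_restrict measurableSet_Iio, Iio_inter_Ioi, mul_comm,
          lintegral_mul_const'' _ (hf.mono_set Ioo_subset_Ioi_self)]

theorem lintegral_ofReal_mul_integral_Ioi_eq_top {f g : ℝ → ℝ} {a : ℝ}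
    (hf : ContinuousOn f (Ici a)) (hf0 : ∀ t ∈ Ioi a, 0 ≤ f t)
    (hg : IntegrableOn g (Ioi a)) (hg0 : ∀ s ∈ Ioi a, 0 ≤ g s)
    (hnot : ¬ IntegrableOn (fun s => g s * ∫ t in a..s, f t) (Ioi a)) :
    ∫⁻ t in Ioi a, ENNReal.ofReal (f t * ∫ s in Ioi t, g s) = ∞ := by
  have hfm : AEMeasurable (fun t => ENNReal.ofReal (f t)) (volume.restrict (Ioi a)) :=
    ((hf.mono Ioi_subset_Ici_self).aemeasurable measurableSet_Ioi).ennreal_ofReal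
  calc ∫⁻ t in Ioi a, ENNReal.ofReal (f t * ∫ s in Ioi t, g s)
      = ∫⁻ t in Ioi a, ENNReal.ofReal (f t) * ∫⁻ s in Ioi t, ENNReal.ofReal (g s) := by
        refine setLIntegral_congr_fun measurableSet_Ioi fun t (ht : a < t) => ?_
        rw [ENNReal.ofReal_mul (hf0 t ht), ofReal_integral_eq_lintegral_ofReal
          (hg.mono_set (Ioi_subset_Ioi ht.le))]
        filter_upwards [ae_restrict_mem measurableSet_Ioi] with s hs
        exact hg0 s (ht.trans hs)
    _ = ∫⁻ s in Ioi a, ENNReal.ofReal (g s) * ∫⁻ t in Ioo a s, ENNReal.ofReal (f t) :=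
        lintegral_Ioi_mul_lintegral_Ioi_swap hfm hg.aemeasurable.ennreal_ofReal
    _ = ∫⁻ s in Ioi a, ENNReal.ofReal (g s * ∫ t in a..s, f t) := by
        refine setLIntegral_congr_fun measurableSet_Ioi fun s (hs : a < s) => ?_
        rw [ENNReal.ofReal_mul (hg0 s hs), integral_of_le hs.le, integral_Ioc_eq_integral_Ioo,
          ofReal_integral_eq_lintegral_ofReal]
        · exact (hf.mono Icc_subset_Ici_self).integrableOn_Icc.mono_set Ioo_subset_Icc_self
        · filter_upwards [ae_restrict_mem measurableSet_Ioo] with t ht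
          exact hf0 t ht.1
    _ = ∞ := by
        contrapose! hnot
        refine ⟨hg.aestronglyMeasurable.mul ((continuousOn_primitive_Ici hf).mono
          Ioi_subset_Ici_self |>.aestronglyMeasurable measurableSet_Ioi), ?_⟩
        rw [hasFiniteIntegral_iff_ofReal]
        · exact hnot.lt_top
        · filter_upwards [ae_restrict_mem measurableSet_Ioi] with s (hs : a < s)
          rw [integral_of_le hs.le]
          exact mul_nonneg (hg0 s hs) (setIntegral_nonneg measurableSet_Ioc fun t ht => hf0 t ht.1)

theorem monotoneOn_Ici_of_hasDerivAt_nonneg {f f' : ℝ → ℝ} {a : ℝ}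
    (hcont : ContinuousOn f (Ici a)) (hderiv : ∀ x ∈ Ioi a, HasDerivAt f (f' x) x)
    (hf' : ∀ x ∈ Ioi a, 0 ≤ f' x) : MonotoneOn f (Ici a) := by
  refine monotoneOn_of_hasDerivWithinAt_nonneg (f' := f') (convex_Ici a) hcont ?_ ?_ <;>
    rw [interior_Ici]
  · exact fun x hx => (hderiv x hx).hasDerivWithinAt
  · exact hf'

theorem tendsto_atTop_of_hasDerivAt_of_not_integrableOn {f f' : ℝ → ℝ} {a : ℝ}
    (hcont : ContinuousOn f (Ici a)) (hderiv : ∀ x ∈ Ioi a, HasDerivAt f (f' x) x)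
    (hf' : ∀ x ∈ Ioi a, 0 ≤ f' x) (hnot : ¬ IntegrableOn f' (Ioi a)) :
    Tendsto f atTop atTop := by
  have hmono := monotoneOn_Ici_of_hasDerivAt_nonneg hcont hderiv hf'
  contrapose! hnot
  obtain ⟨B, hB⟩ : ∃ B, ∀ x ∈ Ici a, f x ≤ B := by
    rw [tendsto_atTop_atTop] at hnot
    push Not at hnot
    obtain ⟨B, hB⟩ := hnot
    refine ⟨B, fun x hx => ?_⟩
    obtain ⟨y, hxy, hy⟩ := hB x
    exact (hmono hx (mem_Ici.mpr (hx.trans hxy)) hxy).trans hy.le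
  have hint : ∀ x, IntegrableOn f' (Ioc a x) := fun x =>
    integrableOn_deriv_of_nonneg (hcont.mono Icc_subset_Ici_self)
      (fun y hy => hderiv y hy.1) (fun y hy => hf' y hy.1)
  refine integrableOn_Ioi_of_intervalIntegral_norm_bounded (B - f a) a hint tendsto_id ?_
  filter_upwards [eventually_ge_atTop a] with x hx
  calc ∫ y in a..x, ‖f' y‖
      = ∫ y in a..x, f' y := by
        simp only [integral_of_le hx]
        exact setIntegral_congr_fun measurableSet_Ioc fun y hy => Real.norm_of_nonneg (hf' y hy.1)
    _ = f x - f a := integral_eq_sub_of_hasDerivAt_of_le hx (hcont.mono Icc_subset_Ici_self)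
        (fun y hy => hderiv y hy.1)
        ((intervalIntegrable_iff_integrableOn_Ioc_of_le hx).mpr (hint x))
    _ ≤ B - f a := by linarith [hB x hx]

theorem not_integrableOn_of_const_mul_le {α : Type*} [MeasurableSpace α] {μ : Measure α}
    {f φ : α → ℝ} {s : Set α} {c : ℝ} (hc : 0 < c) (hle : ∀ x ∈ s, c * φ x ≤ f x)
    (htop : ∫⁻ x in s, ENNReal.ofReal (φ x) ∂μ = ∞) (hs : MeasurableSet s) :
    ¬ IntegrableOn f s μ := by
  intro hi
  refine hi.setLIntegral_lt_top.ne (top_le_iff.mp ?_)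
  calc ∞ = ENNReal.ofReal c * ∫⁻ x in s, ENNReal.ofReal (φ x) ∂μ := by
        rw [htop, ENNReal.mul_top (by simpa using hc)]
    _ = ∫⁻ x in s, ENNReal.ofReal (c * φ x) ∂μ := by
        rw [← lintegral_const_mul' _ _ ENNReal.ofReal_ne_top]
        simp_rw [ENNReal.ofReal_mul hc.le]
    _ ≤ ∫⁻ x in s, ENNReal.ofReal (f x) ∂μ := by
        refine lintegral_mono_ae ?_
        filter_upwards [ae_restrict_mem hs] with x hx
        exact ENNReal.ofReal_le_ofReal (hle x hx)

theorem const_mul_integral_Ioi_one_div_le {d h γ W : ℝ → ℝ} {ξ c C : ℝ} (hc : 0 ≤ c)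
    (hC : 0 ≤ C) (hγ : ∀ x ∈ Ioi ξ, 0 ≤ γ x) (hW : ∀ s ∈ Ioi ξ, 0 < W s)
    (hh : ∀ s ∈ Ioi ξ, 1 ≤ h s) (hint : IntegrableOn (fun s => h s / W s) (Ioi ξ))
    (hWint : IntegrableOn (fun s => 1 / W s) (Ioi ξ))
    (hrep : ∀ x ∈ Ioi ξ, d x = γ x * (C + c * ∫ s in Ioi x, h s / W s)) :
    ∀ x ∈ Ioi ξ, c * (γ x * ∫ s in Ioi x, 1 / W s) ≤ d x := by
  intro x (hx : ξ < x)
  have htail : ∫ s in Ioi x, 1 / W s ≤ ∫ s in Ioi x, h s / W s :=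
    setIntegral_mono_on (hWint.mono_set (Ioi_subset_Ioi hx.le))
      (hint.mono_set (Ioi_subset_Ioi hx.le)) measurableSet_Ioi fun s (hs : x < s) =>
        div_le_div_of_nonneg_right (hh s (hx.trans hs)) (hW s (hx.trans hs)).le
  calc c * (γ x * ∫ s in Ioi x, 1 / W s) = γ x * (c * ∫ s in Ioi x, 1 / W s) := by ring
    _ ≤ d x := by
        rw [hrep x hx]
        exact mul_le_mul_of_nonneg_left (by nlinarith) (hγ x hx)

theorem unbounded_at_natural_boundary_general
    (σ k : ℝ → ℝ) (r lam ξ : ℝ) (hξ : 0 < ξ) (hlam : r < lam)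
    (hσc : ContinuousOn σ (Ioi 0)) (hkc : ContinuousOn k (Ioi 0))
    (hσ : ∀ x ∈ Ioi (0:ℝ), 0 < σ x)
    (γ : ℝ → ℝ)
    (hγ : ∀ x, γ x = Real.exp (-∫ s in ξ..x, 2 * k s / (σ s)^2))
    (hnat : ¬ IntegrableOn
      (fun s => (2 / ((σ s)^2 * γ s)) * ∫ x in ξ..s, γ x) (Ioi ξ) volume)
    (h : ℝ → ℝ) (hh : ContDiffOn ℝ 2 h (Ioi 0))
    (h1 : h ξ = 1)
    (hinc : ∀ x ∈ Ioi (0:ℝ), 0 < deriv h x)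
    (hint : IntegrableOn (fun s => h s / ((σ s)^2 * γ s)) (Ioi ξ) volume)
    (hC : 0 ≤ deriv h ξ - 2*(lam - r) * ∫ s in Ioi ξ, h s / ((σ s)^2 * γ s))
    (hrep : ∀ x ∈ Ici ξ,
      deriv h x = γ x *
        ((deriv h ξ - 2*(lam - r) * ∫ s in Ioi ξ, h s / ((σ s)^2 * γ s))
          + 2*(lam - r) * ∫ s in Ioi x, h s / ((σ s)^2 * γ s))) :
    Tendsto h atTop atTop := by
  have hξ0 : Ici ξ ⊆ Ioi 0 := fun x hx => hξ.trans_le hx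
  have hγ_pos : ∀ x, 0 < γ x := fun x => hγ x ▸ Real.exp_pos _
  have hW : ∀ x ∈ Ioi ξ, 0 < σ x ^ 2 * γ x := fun x hx =>
    mul_pos (pow_pos (hσ x (hξ0 (Ioi_subset_Ici_self hx))) 2) (hγ_pos x)
  have hγ_cont : ContinuousOn γ (Ici ξ) := by
    have : ContinuousOn (fun s => 2 * k s / σ s ^ 2) (Ici ξ) :=
      ((continuousOn_const.mul hkc).div (hσc.pow 2) fun x hx => (pow_pos (hσ x hx) 2).ne').mono hξ0
    exact (continuousOn_congr fun x _ => hγ x).mpr (continuousOn_primitive_Ici this).neg.rexp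
  have hcont : ContinuousOn h (Ici ξ) := hh.continuousOn.mono hξ0
  have hderiv : ∀ x ∈ Ioi ξ, HasDerivAt h (deriv h x) x := fun x (hx : ξ < x) =>
    ((hh.differentiableOn two_ne_zero).differentiableAt
      (isOpen_Ioi.mem_nhds (hξ0 hx.le))).hasDerivAt
  have hderiv_nonneg : ∀ x ∈ Ioi ξ, 0 ≤ deriv h x := fun x (hx : ξ < x) => (hinc x (hξ0 hx.le)).le
  have hh_one : ∀ x ∈ Ioi ξ, 1 ≤ h x := fun x (hx : ξ < x) =>
    h1 ▸ monotoneOn_Ici_of_hasDerivAt_nonneg hcont hderiv hderiv_nonneg self_mem_Ici hx.le hx.le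
  set g := fun s => 1 / (σ s ^ 2 * γ s)
  have hg_pos : ∀ s ∈ Ioi ξ, 0 < g s := fun s hs => one_div_pos.mpr (hW s hs)
  have hg_int : IntegrableOn g (Ioi ξ) := by
    refine hint.mono' ?_ ?_
    · refine ContinuousOn.aestronglyMeasurable ?_ measurableSet_Ioi
      exact continuousOn_const.div (((hσc.mono (Ioi_subset_Ici_self.trans hξ0)).pow 2).mul
        (hγ_cont.mono Ioi_subset_Ici_self)) fun x hx => (hW x hx).ne'
    · filter_upwards [ae_restrict_mem measurableSet_Ioi] with s hs
      rw [Real.norm_of_nonneg (hg_pos s hs).le]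
      exact div_le_div_of_nonneg_right (hh_one s hs) (hW s hs).le
  have hlow := const_mul_integral_Ioi_one_div_le (W := fun s => σ s ^ 2 * γ s)
    (by linarith : 0 ≤ 2 * (lam - r)) hC (fun x _ => (hγ_pos x).le)
    hW hh_one hint hg_int (fun x (hx : ξ < x) => hrep x hx.le)
  have htop : ∫⁻ t in Ioi ξ, ENNReal.ofReal (γ t * ∫ s in Ioi t, g s) = ∞ := by
    refine lintegral_ofReal_mul_integral_Ioi_eq_top hγ_cont (fun t _ => (hγ_pos t).le) hg_int
      (fun s hs => (hg_pos s hs).le) fun hi => hnat ?_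
    exact IntegrableOn.congr_fun (hi.const_mul 2) (fun s _ => by simp only [g]; ring)
      measurableSet_Ioi
  exact tendsto_atTop_of_hasDerivAt_of_not_integrableOn hcont hderiv hderiv_nonneg
    (not_integrableOn_of_const_mul_le (by linarith) hlow htop measurableSet_Ioi)

/-- If `∞` is a natural boundary, then the maximal increasing eigenfunction
`h̄` (for the top eigenvalue `λ̄ > r`) is unbounded: `h̄(x) → ∞`. -/
theorem unbounded_at_natural_boundary
    (σ k : ℝ → ℝ) (r lam ξ : ℝ) (hξ : 0 < ξ) (hlam : r < lam)
    (hσc : ContinuousOn σ (Ioi 0)) (hkc : ContinuousOn k (Ioi 0))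
    (hσ : ∀ x ∈ Ioi (0:ℝ), 0 < σ x)
    (γ : ℝ → ℝ)
    (hγ : ∀ x, γ x = Real.exp (-∫ s in ξ..x, 2 * k s / (σ s)^2))
    (hnat : ¬ IntegrableOn
      (fun s => (2 / ((σ s)^2 * γ s)) * ∫ x in ξ..s, γ x) (Ioi ξ) volume)
    (h : ℝ → ℝ) (hh : ContDiffOn ℝ 2 h (Ioi 0))
    (hpos : ∀ x ∈ Ioi (0:ℝ), 0 < h x) (h1 : h ξ = 1)
    (hinc : ∀ x ∈ Ioi (0:ℝ), 0 < deriv h x)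
    (hode : ∀ x ∈ Ioi (0:ℝ),
      (1/2) * (σ x)^2 * deriv (deriv h) x + k x * deriv h x - r * h x
        = -lam * h x)
    (hint : IntegrableOn (fun s => h s / ((σ s)^2 * γ s)) (Ioi ξ) volume)
    (hC : 0 ≤ deriv h ξ - 2*(lam - r) * ∫ s in Ioi ξ, h s / ((σ s)^2 * γ s))
    (hrep : ∀ x ∈ Ici ξ,
      deriv h x = γ x *
        ((deriv h ξ - 2*(lam - r) * ∫ s in Ioi ξ, h s / ((σ s)^2 * γ s))
          + 2*(lam - r) * ∫ s in Ioi x, h s / ((σ s)^2 * γ s))) :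
    Tendsto h atTop atTop :=
  unbounded_at_natural_boundary_general σ k r lam ξ hξ hlam hσc hkc hσ γ hγ hnat h hh h1 hinc hint
    hC hrep
end
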